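/- arXiv:1606.07591 — 4 statements merged into one kernel-verified Lean document; each statement's English description precedes it below -/
import Mathlib

section
/- If E is an (n+1)-dimensional ECP-space on ([a,b];T), then for any c,d ∈ [a,b] with c < d, E possesses a positive Bernstein-like basis relative to (c,d). -/
open Set

/-- A knot sequence `a = t 0 < t 1 < ⋯ < t (q+1) = b`. -/
structure Knots (q : ℕ) where
  t : Fin (q + 2) → ℝ
  strictMono : StrictMono t

/-- Piecewise functions on `([a,b]; T)`: one section per interval. -/
abbrev PF (q : ℕ) := Fin (q + 1) → ℝ → ℝ

namespace PW

variable {q : ℕ}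

/-- The `k`-th section interval `[t_k, t_{k+1}]`. -/
def Ik (T : Knots q) (k : Fin (q + 1)) : Set ℝ :=
  Set.Icc (T.t k.castSucc) (T.t k.succ)

/-- One-sided `j`-th derivative of the `k`-th section of `F` at `x`
(derivatives taken within the section interval). -/
noncomputable def der (T : Knots q) (F : PF q) (k : Fin (q + 1)) (j : ℕ) (x : ℝ) : ℝ :=
  iteratedDerivWithin j (F k) (Ik T k) x

/-- Lower triangular with positive diagonal entries. -/
def GoodMatrix {n : ℕ} (M : Matrix (Fin (n + 1)) (Fin (n + 1)) ℝ) : Prop :=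
  (∀ i j, i < j → M i j = 0) ∧ (∀ i, 0 < M i i)

/-- The connection conditions at the interior knots: the vector of right derivatives
at `t_{m+1}` equals `M m` times the vector of left derivatives. -/
def Connect (n : ℕ) (T : Knots q)
    (M : Fin q → Matrix (Fin (n + 1)) (Fin (n + 1)) ℝ) (F : PF q) : Prop :=
  ∀ m : Fin q, ∀ i : Fin (n + 1),
    der T F m.succ (i : ℕ) (T.t m.succ.castSucc)
      = ∑ j : Fin (n + 1), M m i j * der T F m.castSucc (j : ℕ) (T.t m.succ.castSucc)

/-- An `(n+1)`-dimensional PW-space on `([a,b]; T)`: an `(n+1)`-dimensional space of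
piecewise functions, satisfying connection conditions given by lower triangular matrices
with positive diagonals, whose section-spaces are `(n+1)`-dimensional W-spaces. -/
structure PWSpace (n q : ℕ) (T : Knots q) where
  M : Fin q → Matrix (Fin (n + 1)) (Fin (n + 1)) ℝ
  goodM : ∀ m, GoodMatrix (M m)
  E : Submodule ℝ (PF q)
  dim : Module.finrank ℝ E = n + 1
  smooth : ∀ F ∈ E, ∀ k, ContDiffOn ℝ n (F k) (Ik T k)
  connect : ∀ F ∈ E, Connect n T M F
  wspace : ∀ k, ∃ g : Fin (n + 1) → ℝ → ℝ,
    (∀ i, ∃ F ∈ E, ∀ x ∈ Ik T k, F k x = g i x) ∧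
    (∀ F ∈ E, ∃ c : Fin (n + 1) → ℝ, ∀ x ∈ Ik T k, F k x = ∑ i, c i * g i x) ∧
    (∀ x ∈ Ik T k,
      (Matrix.of fun i j : Fin (n + 1) =>
        iteratedDerivWithin (j : ℕ) (g i) (Ik T k) x).det ≠ 0)

/-- The left endpoint `a`. -/
def lo (T : Knots q) : ℝ := T.t 0

/-- The right endpoint `b`. -/
def hi (T : Knots q) : ℝ := T.t (Fin.last (q + 1))

/-- The section index attached to a point of `[a,b]` (right side at `a` and at the
interior knots, left side at `b`). -/
noncomputable def sec (T : Knots q) (x : ℝ) : Fin (q + 1) :=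
  if h : ∃ k : Fin (q + 1), T.t k.castSucc ≤ x ∧ x < T.t k.succ then h.choose
  else Fin.last q

/-- Multiplicity of `x` as a zero of `F`: the largest `p ≤ n+1` such that all one-sided
derivatives of order `< p` vanish at `x`. -/
noncomputable def mult (n : ℕ) (T : Knots q) (F : PF q) (x : ℝ) : ℕ :=
  sSup {p | p ≤ n + 1 ∧ ∀ j < p, der T F (sec T x) j x = 0}

/-- The value of a piecewise function at a point. -/
noncomputable def pval (T : Knots q) (F : PF q) (x : ℝ) : ℝ :=
  F (sec T x) x

/-- `F` vanishes identically (on the section intervals). -/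
def NullPF (T : Knots q) (F : PF q) : Prop :=
  ∀ k, ∀ x ∈ Ik T k, F k x = 0

/-- `P` is an ECP-space: every nonzero element has at most `n` zeros in `[a,b]`,
counted with multiplicities up to `n+1`. -/
def IsECP {n : ℕ} {T : Knots q} (P : PWSpace n q T) : Prop :=
  ∀ F ∈ P.E, ¬ NullPF T F →
    ∀ S : Finset ℝ, (↑S : Set ℝ) ⊆ Set.Icc (lo T) (hi T) →
      ∑ x ∈ S, mult n T F x ≤ n

/-- Multiplicity of `x` as a zero of a function `g` of the `k`-th section. -/
noncomputable def multSec (n : ℕ) (T : Knots q) (k : Fin (q + 1)) (g : ℝ → ℝ) (x : ℝ) : ℕ :=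
  sSup {p | p ≤ n + 1 ∧ ∀ j < p, iteratedDerivWithin j g (Ik T k) x = 0}

/-- `P` is a PEC-space: each section-space is an EC-space on its own interval, i.e.
every element not identically zero on `[t_k,t_{k+1}]` has at most `n` zeros there,
counted with multiplicities up to `n+1`. -/
def IsPEC {n : ℕ} {T : Knots q} (P : PWSpace n q T) : Prop :=
  ∀ k, ∀ F ∈ P.E, ¬ (∀ x ∈ Ik T k, F k x = 0) →
    ∀ S : Finset ℝ, (↑S : Set ℝ) ⊆ Ik T k →
      ∑ x ∈ S, multSec n T k (F k) x ≤ n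

/-- `(B 0, …, B n)` is a Bernstein-like basis of `P` relative to `(c,d)`:
a basis such that `B i` vanishes exactly `i` times at `c` and `n - i` times at `d`. -/
def IsBLB {n : ℕ} {T : Knots q} (P : PWSpace n q T) (c d : ℝ)
    (B : Fin (n + 1) → PF q) : Prop :=
  (∀ i, B i ∈ P.E) ∧ LinearIndependent ℝ B ∧
    ∀ i : Fin (n + 1), mult n T (B i) c = (i : ℕ) ∧ mult n T (B i) d = n - (i : ℕ)

/-- Positivity of all one-sided values on the open interval `(c,d)`. -/
def PosOn {n : ℕ} (T : Knots q) (c d : ℝ) (B : Fin (n + 1) → PF q) : Prop :=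
  ∀ i, ∀ k, ∀ x ∈ Ik T k, c < x → x < d → 0 < B i k x

/-- Normalised: the functions sum to `1`. -/
def Normalised {n : ℕ} (T : Knots q) (B : Fin (n + 1) → PF q) : Prop :=
  ∀ k, ∀ x ∈ Ik T k, ∑ i, B i k x = 1

/-- Equality of piecewise functions on the section intervals. -/
def EqSec (T : Knots q) (F G : PF q) : Prop :=
  ∀ k, ∀ x ∈ Ik T k, F k x = G k x

/-- `P` contains the constant function `1`. -/
def ContainsOne {n : ℕ} {T : Knots q} (P : PWSpace n q T) : Prop :=
  ∃ F ∈ P.E, ∀ k, ∀ x ∈ Ik T k, F k x = 1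

/-- Sectionwise derivative of a piecewise function. -/
noncomputable def pderiv (T : Knots q) (F : PF q) : PF q :=
  fun k x => derivWithin (F k) (Ik T k) x

/-- `D` is the derived space `DE` of `P`: its connection matrices are obtained by
deleting the first row and column of those of `P`, and its elements are (up to values
on the section intervals) the sectionwise derivatives of the elements of `P`. -/
def IsDeriv {m : ℕ} {T : Knots q} (P : PWSpace (m + 1) q T) (D : PWSpace m q T) : Prop :=
  (∀ j : Fin q, D.M j = (P.M j).submatrix Fin.succ Fin.succ) ∧
  (∀ G ∈ D.E, ∃ F ∈ P.E, EqSec T G (pderiv T F)) ∧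
  (∀ F ∈ P.E, ∃ G ∈ D.E, EqSec T G (pderiv T F))

/-- The piecewise generalised derivatives `L_i` associated with a system `w` of
piecewise weight functions, computed on the `k`-th section. -/
noncomputable def Lop (T : Knots q) (w : ℕ → PF q) (k : Fin (q + 1)) :
    ℕ → (ℝ → ℝ) → ℝ → ℝ
  | 0, f, x => f x / w 0 k x
  | (i + 1), f, x => derivWithin (Lop T w k i f) (Ik T k) x / w (i + 1) k x

/-- `(w 0, …, w n)` is a system of piecewise weight functions on `([a,b]; T)`:
`w i` is positive and `(n-i)` times continuously differentiable on each section. -/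
def WeightSystem (n : ℕ) (T : Knots q) (w : ℕ → PF q) : Prop :=
  ∀ i ≤ n, ∀ k, (∀ x ∈ Ik T k, 0 < w i k x) ∧ ContDiffOn ℝ (n - i) (w i k) (Ik T k)

/-- Membership in `ECP(w 0, …, w n)`: `F` is `n` times continuously differentiable on
each section, `L_n F` is constant on `[a,b]`, and `L_i F` is continuous across the
interior knots for `i < n`. -/
def ECPcond (n : ℕ) (T : Knots q) (w : ℕ → PF q) (F : PF q) : Prop :=
  (∀ k, ContDiffOn ℝ n (F k) (Ik T k)) ∧
  (∃ c : ℝ, ∀ k, ∀ x ∈ Ik T k, Lop T w k n (F k) x = c) ∧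
  (∀ i < n, ∀ m : Fin q,
    Lop T w m.succ i (F m.succ) (T.t m.succ.castSucc)
      = Lop T w m.castSucc i (F m.castSucc) (T.t m.succ.castSucc))

/-! For each `i`, the `n` linear conditions "vanish to order `i` at `c` and to order `n - i`
at `d`" have a nonzero solution in the `(n+1)`-dimensional space; the ECP bound forces the
multiplicities to be exact and leaves no room for a zero in `(c,d)`. Such a function has
constant sign on `(c,d)`: inside a section by the intermediate value theorem, and across a
knot because the connection matrices multiply values by their positive `(0,0)` entry. The
resulting functions are linearly independent since their multiplicities at `c` are distinct. -/

variable {n : ℕ} {T : Knots q}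

lemma knot_castSucc_lt_succ (T : Knots q) (k : Fin (q + 1)) : T.t k.castSucc < T.t k.succ :=
  T.strictMono k.castSucc_lt_succ

lemma uniqueDiffOn_Ik (T : Knots q) (k : Fin (q + 1)) : UniqueDiffOn ℝ (Ik T k) :=
  uniqueDiffOn_Icc (knot_castSucc_lt_succ T k)

lemma left_mem_Ik (T : Knots q) (k : Fin (q + 1)) : T.t k.castSucc ∈ Ik T k :=
  left_mem_Icc.2 (knot_castSucc_lt_succ T k).le

lemma right_mem_Ik (T : Knots q) (k : Fin (q + 1)) : T.t k.succ ∈ Ik T k :=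
  right_mem_Icc.2 (knot_castSucc_lt_succ T k).le

lemma Ik_subset_Icc (T : Knots q) (k : Fin (q + 1)) : Ik T k ⊆ Icc (lo T) (hi T) :=
  Icc_subset_Icc (T.strictMono.monotone (Fin.zero_le _)) (T.strictMono.monotone (Fin.le_last _))

lemma le_of_knot_le_of_lt_knot {k k' : Fin (q + 1)} {x : ℝ} (h : T.t k.castSucc ≤ x)
    (h' : x < T.t k'.succ) : k ≤ k' :=
  Fin.castSucc_lt_succ_iff.1 (T.strictMono.lt_iff_lt.1 (h.trans_lt h'))

lemma sec_eq {k : Fin (q + 1)} {x : ℝ} (h : T.t k.castSucc ≤ x) (h' : x < T.t k.succ) :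
    sec T x = k := by
  have hex : ∃ k : Fin (q + 1), T.t k.castSucc ≤ x ∧ x < T.t k.succ := ⟨k, h, h'⟩
  rw [sec, dif_pos hex]
  exact le_antisymm (le_of_knot_le_of_lt_knot hex.choose_spec.1 h')
    (le_of_knot_le_of_lt_knot h hex.choose_spec.2)

lemma exists_knot_le_of_lt_hi {x : ℝ} (h : lo T ≤ x) (h' : x < hi T) :
    ∃ k : Fin (q + 1), T.t k.castSucc ≤ x ∧ x < T.t k.succ := by
  by_contra! hnot
  have hle : ∀ j : Fin (q + 2), T.t j ≤ x := Fin.induction h hnot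
  exact (hle (Fin.last _)).not_gt h'

lemma sec_hi : sec T (hi T) = Fin.last q := by
  refine dif_neg ?_
  rintro ⟨k, -, hk⟩
  exact (T.strictMono.monotone (Fin.le_last k.succ)).not_gt hk

lemma mem_Ik_sec {x : ℝ} (hx : x ∈ Icc (lo T) (hi T)) : x ∈ Ik T (sec T x) := by
  rcases hx.2.lt_or_eq with hlt | rfl
  · obtain ⟨k, hk, hk'⟩ := exists_knot_le_of_lt_hi hx.1 hlt
    rw [sec_eq hk hk']
    exact ⟨hk, hk'.le⟩
  · rw [sec_hi]
    simpa [hi, Fin.succ_last] using right_mem_Ik T (Fin.last q)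

lemma der_eq_zero_of_lt_mult {F : PF q} {x : ℝ} {j : ℕ} (hj : j < mult n T F x) :
    der T F (sec T x) j x = 0 :=
  (Nat.sSup_mem (s := {p | p ≤ n + 1 ∧ ∀ j < p, der T F (sec T x) j x = 0})
    ⟨0, Nat.zero_le _, fun _ hj => absurd hj (Nat.not_lt_zero _)⟩ ⟨n + 1, fun _ hp => hp.1⟩).2 j hj

lemma le_mult {F : PF q} {x : ℝ} {p : ℕ} (hp : p ≤ n + 1)
    (h : ∀ j < p, der T F (sec T x) j x = 0) : p ≤ mult n T F x :=
  le_csSup ⟨n + 1, fun _ hr => hr.1⟩ ⟨hp, h⟩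

lemma der_ne_zero_of_mult_eq {F : PF q} {x : ℝ} {p : ℕ} (h : mult n T F x = p) (hp : p ≤ n) :
    der T F (sec T x) p x ≠ 0 := by
  intro h0
  have : p + 1 ≤ mult n T F x := le_mult (by omega) fun j hj => by
    rcases (Nat.lt_succ_iff.1 hj).lt_or_eq with hjp | rfl
    · exact der_eq_zero_of_lt_mult (h ▸ hjp)
    · exact h0
  omega

lemma one_le_mult_of_pval_eq_zero {F : PF q} {x : ℝ} (h : pval T F x = 0) :
    1 ≤ mult n T F x :=
  le_mult (by omega) fun j hj => by
    rw [Nat.lt_one_iff.1 hj]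
    simpa [der, pval] using h

lemma mult_neg (F : PF q) (x : ℝ) : mult n T (-F) x = mult n T F x := by
  simp [mult, der, iteratedDerivWithin_neg]

lemma _root_.IsPreconnected.pos_iff_pos_of_ne_zero {f : ℝ → ℝ} {s : Set ℝ} (hs : IsPreconnected s)
    (hf : ContinuousOn f s) (hne : ∀ x ∈ s, f x ≠ 0) {x y : ℝ} (hx : x ∈ s) (hy : y ∈ s) :
    0 < f x ↔ 0 < f y := by
  suffices key : ∀ x ∈ s, ∀ y ∈ s, 0 < f x → 0 < f y from ⟨key x hx y hy, key y hy x hx⟩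
  intro x hx y hy hfx
  by_contra! hfy
  obtain ⟨z, hz, hz0⟩ :=
    hs.intermediate_value hy hx hf ⟨(hfy.lt_of_ne (hne y hy)).le, hfx.le⟩
  exact hne z hz hz0

namespace PWSpace

variable (P : PWSpace n q T)

instance finiteDimensional : FiniteDimensional ℝ P.E :=
  Module.finite_of_finrank_pos (by rw [P.dim]; omega)

lemma contDiffWithinAt {F : PF q} (hF : F ∈ P.E) {k : Fin (q + 1)} {x : ℝ} (hx : x ∈ Ik T k)
    {j : ℕ} (hj : j ≤ n) : ContDiffWithinAt ℝ j (F k) (Ik T k) x :=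
  ((P.smooth F hF k).contDiffWithinAt hx).of_le (by exact_mod_cast hj)

noncomputable def jet {k : Fin (q + 1)} {x : ℝ} (hx : x ∈ Ik T k) :
    P.E →ₗ[ℝ] (Fin (n + 1) → ℝ) where
  toFun F j := der T F k j x
  map_add' F G := funext fun j =>
    iteratedDerivWithin_add hx (uniqueDiffOn_Ik T k) (P.contDiffWithinAt F.2 hx j.is_le)
      (P.contDiffWithinAt G.2 hx j.is_le)
  map_smul' e F := funext fun j =>
    iteratedDerivWithin_const_smul hx (uniqueDiffOn_Ik T k) e (P.contDiffWithinAt F.2 hx j.is_le)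

lemma jet_apply {k : Fin (q + 1)} {x : ℝ} (hx : x ∈ Ik T k) (F : P.E) (j : Fin (n + 1)) :
    P.jet hx F j = der T F k j x :=
  rfl

/-- The rows of the nonsingular Wronskian are jets of elements, so the jet map is onto. -/
lemma jet_injective {k : Fin (q + 1)} {x : ℝ} (hx : x ∈ Ik T k) :
    Function.Injective (P.jet hx) := by
  refine (LinearMap.injective_iff_surjective_of_finrank_eq_finrank (by simp [P.dim])).2 ?_
  obtain ⟨g, hgE, -, hdet⟩ := P.wspace k
  choose G hGE hGg using hgE
  have hrows := Matrix.linearIndependent_rows_of_det_ne_zero (hdet x hx)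
  rw [← LinearMap.range_eq_top, eq_top_iff, ← hrows.span_eq_top_of_card_eq_finrank (by simp),
    Submodule.span_le]
  rintro _ ⟨i, rfl⟩
  exact ⟨⟨G i, hGE i⟩, funext fun j => iteratedDerivWithin_congr (hGg i) hx⟩

lemma eq_zero_of_nullPF {F : PF q} (hF : F ∈ P.E) (hnull : NullPF T F) : F = 0 := by
  have hx := left_mem_Ik T 0
  have hjet : P.jet hx ⟨F, hF⟩ = P.jet hx 0 := funext fun j => by
    rw [map_zero, jet_apply, der, iteratedDerivWithin_congr (hnull 0) hx]
    simp
  exact congrArg Subtype.val (P.jet_injective hx hjet)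

lemma apply_knot {F : PF q} (hF : F ∈ P.E) (m : Fin q) :
    F m.succ (T.t m.succ.castSucc) = P.M m 0 0 * F m.castSucc (T.t m.succ.castSucc) := by
  have h := P.connect F hF m 0
  rwa [Fintype.sum_eq_single 0 fun j hj => by
      rw [(P.goodM m).1 0 j (Fin.pos_iff_ne_zero.2 hj), zero_mul]] at h

lemma pos_iff_pos_at_knot {F : PF q} (hF : F ∈ P.E) (m : Fin q) :
    0 < F m.castSucc (T.t m.succ.castSucc) ↔ 0 < F m.succ (T.t m.succ.castSucc) := by
  rw [P.apply_knot hF, mul_pos_iff_of_pos_left ((P.goodM m).2 0)]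

lemma pval_eq_zero {F : PF q} (hF : F ∈ P.E) {k : Fin (q + 1)} {x : ℝ} (hx : x ∈ Ik T k)
    (h : F k x = 0) : pval T F x = 0 := by
  rcases hx.2.lt_or_eq with hlt | rfl
  · rwa [pval, sec_eq hx.1 hlt]
  rcases k.eq_castSucc_or_eq_last with ⟨m, rfl⟩ | rfl
  · rw [Fin.succ_castSucc] at h ⊢
    rw [pval, sec_eq le_rfl (knot_castSucc_lt_succ T m.succ), P.apply_knot hF, h, mul_zero]
  · have hhi : T.t (Fin.last q).succ = hi T := by rw [Fin.succ_last]; rfl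
    rw [hhi] at h ⊢
    rwa [pval, sec_hi]

lemma pos_iff_pos_of_ne_zero {F : PF q} (hF : F ∈ P.E) {c d : ℝ}
    (hne : ∀ k, ∀ x ∈ Ik T k ∩ Ioo c d, F k x ≠ 0) {k : Fin (q + 1)} {x : ℝ}
    (hx : x ∈ Ik T k ∩ Ioo c d) :
    ∀ k' : Fin (q + 1), k ≤ k' → ∀ y ∈ Ik T k' ∩ Ioo c d, (0 < F k x ↔ 0 < F k' y) := by
  have hsection : ∀ k, ∀ x ∈ Ik T k ∩ Ioo c d, ∀ y ∈ Ik T k ∩ Ioo c d,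
      (0 < F k x ↔ 0 < F k y) := fun k _ hx _ hy =>
    (((convex_Icc _ _).inter (convex_Ioo c d)).isPreconnected.pos_iff_pos_of_ne_zero
      ((P.smooth F hF k).continuousOn.mono inter_subset_left) (hne k) hx hy)
  refine Fin.induction (fun hk y hy => ?_) (fun m ih hk y hy => ?_)
  · rw [Fin.le_zero_iff.1 hk] at hx ⊢
    exact hsection 0 x hx y hy
  rcases hk.lt_or_eq with hlt | rfl
  · set z := T.t m.succ.castSucc
    have hzl : z ∈ Ik T m.castSucc ∩ Ioo c d := by
      have hxz : x ≤ z := hx.1.2.trans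
        (T.strictMono.monotone (Fin.succ_le_succ_iff.2 (Fin.le_castSucc_iff.2 hlt)))
      refine ⟨?_, hx.2.1.trans_le hxz, (hy.1.1).trans_lt hy.2.2⟩
      have hz := right_mem_Ik T m.castSucc
      rwa [Fin.succ_castSucc] at hz
    have hzr : z ∈ Ik T m.succ ∩ Ioo c d := ⟨left_mem_Ik T m.succ, hzl.2⟩
    exact (ih (Fin.le_castSucc_iff.2 hlt) z hzl).trans
      ((P.pos_iff_pos_at_knot hF m).trans (hsection _ z hzr y hy))
  · exact hsection _ x hx y hy

lemma pos_or_neg_of_ne_zero {F : PF q} (hF : F ∈ P.E) {c d : ℝ}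
    (hne : ∀ k, ∀ x ∈ Ik T k ∩ Ioo c d, F k x ≠ 0) :
    (∀ k, ∀ x ∈ Ik T k ∩ Ioo c d, 0 < F k x) ∨ (∀ k, ∀ x ∈ Ik T k ∩ Ioo c d, F k x < 0) := by
  by_cases h : ∃ k, ∃ x ∈ Ik T k ∩ Ioo c d, 0 < F k x
  · obtain ⟨k₀, x₀, hx₀, hpos⟩ := h
    refine Or.inl fun k x hx => ?_
    rcases le_total k₀ k with hle | hle
    · exact (P.pos_iff_pos_of_ne_zero hF hne hx₀ k hle x hx).1 hpos
    · exact (P.pos_iff_pos_of_ne_zero hF hne hx k₀ hle x₀ hx₀).2 hpos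
  · push Not at h
    exact Or.inr fun k x hx => (h k x hx).lt_of_ne (hne k x hx)

lemma exists_ne_zero_der_eq_zero {k k' : Fin (q + 1)} {x y : ℝ} (hx : x ∈ Ik T k)
    (hy : y ∈ Ik T k') {p r : ℕ} (hpr : p + r ≤ n) :
    ∃ F ∈ P.E, F ≠ 0 ∧ (∀ j < p, der T F k j x = 0) ∧ (∀ j < r, der T F k' j y = 0) := by
  let Φ : P.E →ₗ[ℝ] (Fin p → ℝ) × (Fin r → ℝ) :=
    (LinearMap.pi fun l => LinearMap.proj (Fin.castLE (by omega) l) ∘ₗ P.jet hx).prod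
      (LinearMap.pi fun l => LinearMap.proj (Fin.castLE (by omega) l) ∘ₗ P.jet hy)
  obtain ⟨F, hFker, hF0⟩ := Submodule.exists_mem_ne_zero_of_ne_bot
    (LinearMap.ker_ne_bot_of_finrank_lt (f := Φ) (by simp [P.dim]; omega))
  have hΦ : Φ F = 0 := hFker
  refine ⟨F, F.2, fun h => hF0 (Subtype.ext h), fun j hj => ?_, fun j hj => ?_⟩
  · exact congrFun (congrArg Prod.fst hΦ) ⟨j, hj⟩
  · exact congrFun (congrArg Prod.snd hΦ) ⟨j, hj⟩

end PWSpace

lemma linearIndependent_of_mult_eq (P : PWSpace n q T) {B : Fin (n + 1) → PF q}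
    (hB : ∀ i, B i ∈ P.E) {c : ℝ} (hc : c ∈ Ik T (sec T c))
    (hmult : ∀ i, mult n T (B i) c = i) : LinearIndependent ℝ B := by
  let B' : Fin (n + 1) → P.E := fun i => ⟨B i, hB i⟩
  have hupper : (Matrix.of fun i => P.jet hc (B' i)).IsUpperTriangular := fun i j hji =>
    der_eq_zero_of_lt_mult (by rw [hmult]; exact hji)
  have hdet : (Matrix.of fun i => P.jet hc (B' i)).det ≠ 0 := by
    rw [Matrix.det_of_isUpperTriangular hupper]
    exact Finset.prod_ne_zero_iff.2 fun i _ => der_ne_zero_of_mult_eq (hmult i) i.is_le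
  have hB' : LinearIndependent ℝ B' :=
    LinearIndependent.of_comp (P.jet hc) (Matrix.linearIndependent_rows_of_det_ne_zero hdet)
  exact hB'.map' P.E.subtype (Submodule.ker_subtype _)

namespace IsECP

variable {P : PWSpace n q T}

lemma exists_mult_eq (hP : IsECP P) {c d : ℝ} (hc : c ∈ Icc (lo T) (hi T))
    (hd : d ∈ Icc (lo T) (hi T)) (hcd : c < d) {i : ℕ} (hi : i ≤ n) :
    ∃ F ∈ P.E, mult n T F c = i ∧ mult n T F d = n - i ∧
      ∀ k, ∀ x ∈ Ik T k ∩ Ioo c d, F k x ≠ 0 := by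
  obtain ⟨F, hF, hF0, hFc, hFd⟩ :=
    P.exists_ne_zero_der_eq_zero (mem_Ik_sec hc) (mem_Ik_sec hd) (p := i) (r := n - i) (by omega)
  have hnull : ¬ NullPF T F := fun h => hF0 (P.eq_zero_of_nullPF hF h)
  have hmc : i ≤ mult n T F c := le_mult (by omega) hFc
  have hmd : n - i ≤ mult n T F d := le_mult (by omega) hFd
  have hcd' := hP F hF hnull {c, d} (by simp [insert_subset_iff, hc, hd])
  rw [Finset.sum_pair hcd.ne] at hcd'
  refine ⟨F, hF, by omega, by omega, fun k x hx hFx => ?_⟩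
  have hmx := one_le_mult_of_pval_eq_zero (n := n) (P.pval_eq_zero hF hx.1 hFx)
  have hcxd := hP F hF hnull {c, x, d}
    (by simp [insert_subset_iff, hc, hd, Ik_subset_Icc T k hx.1])
  rw [Finset.sum_insert (by simp [hx.2.1.ne, hcd.ne]), Finset.sum_pair hx.2.2.ne] at hcxd
  omega

lemma exists_pos_mult_eq (hP : IsECP P) {c d : ℝ} (hc : c ∈ Icc (lo T) (hi T))
    (hd : d ∈ Icc (lo T) (hi T)) (hcd : c < d) {i : ℕ} (hi : i ≤ n) :
    ∃ B ∈ P.E, mult n T B c = i ∧ mult n T B d = n - i ∧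
      ∀ k, ∀ x ∈ Ik T k, c < x → x < d → 0 < B k x := by
  obtain ⟨F, hF, hFc, hFd, hne⟩ := hP.exists_mult_eq hc hd hcd hi
  rcases P.pos_or_neg_of_ne_zero hF hne with hpos | hneg
  · exact ⟨F, hF, hFc, hFd, fun k x hx hcx hxd => hpos k x ⟨hx, hcx, hxd⟩⟩
  · refine ⟨-F, P.E.neg_mem hF, by rwa [mult_neg], by rwa [mult_neg], fun k x hx hcx hxd => ?_⟩
    simpa using hneg k x ⟨hx, hcx, hxd⟩

end IsECP

/-- Theorem: an `(n+1)`-dimensional ECP-space possesses a positive Bernstein-like basis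
relative to any `(c,d)` with `c < d` in `[a,b]`. -/
theorem stmt10 {q n : ℕ} (T : Knots q) (P : PWSpace n q T) (hP : IsECP P) :
    ∀ c d : ℝ, c ∈ Set.Icc (lo T) (hi T) → d ∈ Set.Icc (lo T) (hi T) → c < d →
      ∃ B : Fin (n + 1) → PF q, IsBLB P c d B ∧ PosOn T c d B := by
  intro c d hc hd hcd
  choose B hBE hBc hBd hBpos using fun i : Fin (n + 1) => hP.exists_pos_mult_eq hc hd hcd i.is_le
  exact ⟨B, ⟨hBE, linearIndependent_of_mult_eq P hBE (mem_Ik_sec hc) hBc,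
    fun i => ⟨hBc i, hBd i⟩⟩, hBpos⟩

end PW
end

section
/- Let n ≥ 1, a < b, and let B_0,…,B_n : ℝ → ℝ be n times continuously differentiable on [a,b] with Σ_{i=0}^n B_i = 1 on [a,b], and suppose that for each i = 0,…,n: B_i^{(j)}(a) = 0 for 0 ≤ j ≤ i−1, B_i^{(i)}(a) ≠ 0, B_i^{(j)}(b) = 0 for 0 ≤ j ≤ n−i−1, and B_i^{(n−i)}(b) ≠ 0. Then for each i = 0,…,n−1 the function V_i := (B_{i+1}+⋯+B_n)′ satisfies: V_i^{(j)}(a) = 0 for 0 ≤ j ≤ i−1, V_i^{(i)}(a) ≠ 0, V_i^{(j)}(b) = 0 for 0 ≤ j ≤ n−i−2, and V_i^{(n−1−i)}(b) ≠ 0. -/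
/-!
Split `∑ B_j = 1` into the head `H = B_0 + ⋯ + B_i` and the tail `T = B_{i+1} + ⋯ + B_n`,
so that `V_i = T' = -H'` on `[a, b]`. At `a`, every summand of `T` except `B_{i+1}` vanishes
to order at least `i + 2`, so `T` vanishes exactly `i + 1` times; at `b`, every summand of `H`
except `B_i` vanishes to order at least `n - i + 1`, so `H` vanishes exactly `n - i` times.
Differentiating lowers both orders by one.
-/

open Set Finset

section VanishesExactly

variable {𝕜 F : Type*} [NontriviallyNormedField 𝕜] [NormedAddCommGroup F] [NormedSpace 𝕜 F]

def VanishesExactly (f : 𝕜 → F) (s : Set 𝕜) (x : 𝕜) (m : ℕ) : Prop :=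
  (∀ j < m, iteratedDerivWithin j f s x = 0) ∧ iteratedDerivWithin m f s x ≠ 0

variable {f g : 𝕜 → F} {s : Set 𝕜} {x : 𝕜} {m : ℕ}

theorem VanishesExactly.congr (h : VanishesExactly f s x m) (hfg : EqOn f g s) (hx : x ∈ s) :
    VanishesExactly g s x m := by
  simpa only [VanishesExactly, ← iteratedDerivWithin_congr hfg hx] using h

theorem VanishesExactly.neg (h : VanishesExactly f s x m) : VanishesExactly (-f) s x m := by
  simpa only [VanishesExactly, iteratedDerivWithin_neg, neg_eq_zero, neg_ne_zero] using h

theorem VanishesExactly.derivWithin (h : VanishesExactly f s x (m + 1)) :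
    VanishesExactly (derivWithin f s) s x m := by
  refine ⟨fun j hj => ?_, ?_⟩
  · rw [← iteratedDerivWithin_succ']
    exact h.1 (j + 1) (by omega)
  · rw [← iteratedDerivWithin_succ']
    exact h.2

theorem VanishesExactly.sum {ι : Type*} {u : Finset ι} {f : ι → 𝕜 → F} {i₀ : ι}
    (hs : UniqueDiffOn 𝕜 s) (hx : x ∈ s) (hf : ∀ i ∈ u, ContDiffOn 𝕜 m (f i) s)
    (hi₀ : i₀ ∈ u) (h₀ : VanishesExactly (f i₀) s x m)
    (hrest : ∀ i ∈ u, i ≠ i₀ → ∀ j ≤ m, iteratedDerivWithin j (f i) s x = 0) :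
    VanishesExactly (fun y => ∑ i ∈ u, f i y) s x m := by
  have hsum : ∀ j ≤ m, iteratedDerivWithin j (fun y => ∑ i ∈ u, f i y) s x
      = iteratedDerivWithin j (f i₀) s x := by
    intro j hj
    rw [iteratedDerivWithin_fun_sum hx hs
      fun i hi => ((hf i hi).of_le (by exact_mod_cast hj)) x hx]
    exact sum_eq_single_of_mem i₀ hi₀ fun i hi hne => hrest i hi hne j hj
  refine ⟨fun j hj => ?_, ?_⟩
  · rw [hsum j hj.le]
    exact h₀.1 j hj
  · rw [hsum m le_rfl]
    exact h₀.2

variable {n : ℕ} {B : Fin (n + 1) → 𝕜 → F}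

theorem vanishesExactly_sum_tail (hs : UniqueDiffOn 𝕜 s) (hx : x ∈ s)
    (hB : ∀ j, ContDiffOn 𝕜 n (B j) s) (hBx : ∀ j, VanishesExactly (B j) s x j) (i : Fin n) :
    VanishesExactly (fun y => ∑ j ∈ univ.filter (fun j : Fin (n + 1) => (i : ℕ) < j), B j y)
      s x (i + 1) := by
  refine .sum hs hx (fun j _ => (hB j).of_le (by exact_mod_cast i.isLt)) (i₀ := i.succ)
    (by simp) (by simpa using hBx i.succ) fun j hj hne k hk => (hBx j).1 k ?_
  have : (j : ℕ) ≠ i + 1 := fun h => hne (Fin.ext (by simpa using h))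
  simp only [mem_filter_univ] at hj
  omega

theorem vanishesExactly_sum_head (hs : UniqueDiffOn 𝕜 s) (hx : x ∈ s)
    (hB : ∀ j, ContDiffOn 𝕜 n (B j) s) (hBx : ∀ j, VanishesExactly (B j) s x (n - j))
    (i : Fin n) :
    VanishesExactly (fun y => ∑ j ∈ univ.filter (fun j : Fin (n + 1) => ¬(i : ℕ) < j), B j y)
      s x (n - i) := by
  refine .sum hs hx (fun j _ => (hB j).of_le (by exact_mod_cast Nat.sub_le n i))
    (i₀ := i.castSucc) (by simp) (by simpa using hBx i.castSucc)
    fun j hj hne k hk => (hBx j).1 k ?_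
  have : (j : ℕ) ≠ i := fun h => hne (Fin.ext (by simpa using h))
  simp only [mem_filter_univ, not_lt] at hj
  omega

end VanishesExactly

theorem stmt14_general (n : ℕ) (a b : ℝ) (hab : a < b)
    (B : Fin (n + 1) → ℝ → ℝ)
    (hsm : ∀ i, ContDiffOn ℝ n (B i) (Set.Icc a b))
    (hnorm : ∀ x ∈ Set.Icc a b, ∑ i, B i x = 1)
    (ha : ∀ i : Fin (n + 1),
      (∀ j < (i : ℕ), iteratedDerivWithin j (B i) (Set.Icc a b) a = 0) ∧
      iteratedDerivWithin (i : ℕ) (B i) (Set.Icc a b) a ≠ 0)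
    (hb : ∀ i : Fin (n + 1),
      (∀ j < n - (i : ℕ), iteratedDerivWithin j (B i) (Set.Icc a b) b = 0) ∧
      iteratedDerivWithin (n - (i : ℕ)) (B i) (Set.Icc a b) b ≠ 0) :
    ∀ i : Fin n, ∀ V : ℝ → ℝ,
      (∀ x : ℝ, V x = derivWithin
        (fun y => ∑ j : Fin (n + 1), if (i : ℕ) < (j : ℕ) then B j y else 0)
        (Set.Icc a b) x) →
      (∀ j < (i : ℕ), iteratedDerivWithin j V (Set.Icc a b) a = 0) ∧
      iteratedDerivWithin (i : ℕ) V (Set.Icc a b) a ≠ 0 ∧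
      (∀ j < n - 1 - (i : ℕ), iteratedDerivWithin j V (Set.Icc a b) b = 0) ∧
      iteratedDerivWithin (n - 1 - (i : ℕ)) V (Set.Icc a b) b ≠ 0 := by
  intro i V hV
  have hs : UniqueDiffOn ℝ (Icc a b) := uniqueDiffOn_Icc hab
  set tail := fun y => ∑ j ∈ univ.filter (fun j : Fin (n + 1) => (i : ℕ) < j), B j y
  set head := fun y => ∑ j ∈ univ.filter (fun j : Fin (n + 1) => ¬(i : ℕ) < j), B j y
  have hV : V = derivWithin tail (Icc a b) := by
    funext x
    simp only [hV, tail, Finset.sum_filter]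
  have htail_eq : EqOn tail (fun y => 1 - head y) (Icc a b) := fun y hy => by
    rw [← hnorm y hy, ← sum_filter_add_sum_filter_not _ (fun j : Fin (n + 1) => (i : ℕ) < j)]
    ring
  have hV_eq : EqOn (-derivWithin head (Icc a b)) V (Icc a b) := fun y hy => by
    rw [hV, derivWithin_congr htail_eq (htail_eq hy), derivWithin_const_sub]
    rfl
  obtain ⟨hVa₁, hVa₂⟩ : VanishesExactly V (Icc a b) a i :=
    hV ▸ (vanishesExactly_sum_tail hs (left_mem_Icc.2 hab.le) hsm ha i).derivWithin
  have hhead := vanishesExactly_sum_head hs (right_mem_Icc.2 hab.le) hsm hb i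
  rw [show n - (i : ℕ) = n - 1 - i + 1 by omega] at hhead
  obtain ⟨hVb₁, hVb₂⟩ : VanishesExactly V (Icc a b) b (n - 1 - i) :=
    hhead.derivWithin.neg.congr hV_eq (right_mem_Icc.2 hab.le)
  exact ⟨hVa₁, hVa₂, hVb₁, hVb₂⟩

/-- Theorem: a normalised Bernstein-like system `(B 0, …, B n)` relative to `(a,b)`
generates, via `Vᵢ = (B_{i+1} + ⋯ + B_n)'`, a Bernstein-like system of degree `n-1`:
`Vᵢ` vanishes exactly `i` times at `a` and exactly `n-1-i` times at `b`. -/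
theorem stmt14 (n : ℕ) (hn : 1 ≤ n) (a b : ℝ) (hab : a < b)
    (B : Fin (n + 1) → ℝ → ℝ)
    (hsm : ∀ i, ContDiffOn ℝ n (B i) (Set.Icc a b))
    (hnorm : ∀ x ∈ Set.Icc a b, ∑ i, B i x = 1)
    (ha : ∀ i : Fin (n + 1),
      (∀ j < (i : ℕ), iteratedDerivWithin j (B i) (Set.Icc a b) a = 0) ∧
      iteratedDerivWithin (i : ℕ) (B i) (Set.Icc a b) a ≠ 0)
    (hb : ∀ i : Fin (n + 1),
      (∀ j < n - (i : ℕ), iteratedDerivWithin j (B i) (Set.Icc a b) b = 0) ∧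
      iteratedDerivWithin (n - (i : ℕ)) (B i) (Set.Icc a b) b ≠ 0) :
    ∀ i : Fin n, ∀ V : ℝ → ℝ,
      (∀ x : ℝ, V x = derivWithin
        (fun y => ∑ j : Fin (n + 1), if (i : ℕ) < (j : ℕ) then B j y else 0)
        (Set.Icc a b) x) →
      (∀ j < (i : ℕ), iteratedDerivWithin j V (Set.Icc a b) a = 0) ∧
      iteratedDerivWithin (i : ℕ) V (Set.Icc a b) a ≠ 0 ∧
      (∀ j < n - 1 - (i : ℕ), iteratedDerivWithin j V (Set.Icc a b) b = 0) ∧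
      iteratedDerivWithin (n - 1 - (i : ℕ)) V (Set.Icc a b) b ≠ 0 :=
  stmt14_general n a b hab B hsm hnorm ha hb
end

section
/- Let α, γ, ζ > 0 and β, δ, ε ∈ ℝ, and let M be the 4×4 lower triangular matrix with rows (1,0,0,0), (0,α,0,0), (0,β,γ,0), (0,δ,ε,ζ). Let E be the 4-dimensional PW-space on ([0,2];(1)) whose elements are pairs (P,Q) of real polynomials of degree at most 3 (the sections on [0,1] and [1,2]) satisfying the connection condition (Q(1),Q′(1),Q″(1),Q‴(1)) = M·(P(1),P′(1),P″(1),P‴(1))). Then E is an ECP-space good for design on ([0,2];(1)) if and only if ε + 2(γ+ζ) > 0 and −2(β+ε+α+2γ+ζ) < δ < (ε+2ζ)(β+2α)/γ + 2(α+ζ). -/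
open Set

/-- The `j`-th derivative of a polynomial. -/
noncomputable def pder : ℕ → Polynomial ℝ → Polynomial ℝ
  | 0, R => R
  | (j + 1), R => Polynomial.derivative (pder j R)

/-- Evaluation of the `j`-th derivative at `x`. -/
noncomputable def pev (R : Polynomial ℝ) (j : ℕ) (x : ℝ) : ℝ :=
  (pder j R).eval x

/-- The connection condition at the knot `1`: the vector of derivatives of `Q` of
orders `0,…,3` at `1` equals `M` times that of `P`. -/
def Conn4 (M : Matrix (Fin 4) (Fin 4) ℝ) (P Q : Polynomial ℝ) : Prop :=
  ∀ i : Fin 4, pev Q (i : ℕ) 1 = ∑ j : Fin 4, M i j * pev P (j : ℕ) 1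

/-- Multiplicity (capped at `3`) of `x` as a zero of the piecewise function with
sections `p` on `[0,1]` and `q` on `[1,2]` (right side at `0` and at the knot `1`,
left side at `2`). -/
noncomputable def pmult (p q : Polynomial ℝ) (x : ℝ) : ℕ :=
  sSup {m | m ≤ 3 ∧ ∀ j < m, pev (if x < 1 then p else q) j x = 0}

/-- `E` (the space of pairs `(P,Q)` of cubics satisfying the connection condition `M`
at the knot `1`) is an ECP-space good for design on `([0,2];(1))`: every nonzero element
`(P',Q')` of the derived space `DE` has at most `2` zeros in `[0,2]`, counted with
multiplicities up to `3`. -/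
def GoodForDesign (M : Matrix (Fin 4) (Fin 4) ℝ) : Prop :=
  ∀ P Q : Polynomial ℝ, P.natDegree ≤ 3 → Q.natDegree ≤ 3 → Conn4 M P Q →
    ¬(Polynomial.derivative P = 0 ∧ Polynomial.derivative Q = 0) →
    ∀ S : Finset ℝ, (↑S : Set ℝ) ⊆ Set.Icc (0 : ℝ) 2 →
      ∑ x ∈ S, pmult (Polynomial.derivative P) (Polynomial.derivative Q) x ≤ 2

open Polynomial

lemma convex2 {t u v : ℝ} (ht0 : 0 ≤ t) (ht1 : t ≤ 1) (hu : 0 < u) (hv : 0 < v) :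
    0 < (1-t)*u + t*v := by
  rcases le_or_gt t (1/2) with h | h
  · nlinarith [mul_nonneg ht0 hv.le, mul_nonneg (by linarith : (0:ℝ) ≤ 1/2 - t) hu.le]
  · nlinarith [mul_nonneg (by linarith : (0:ℝ) ≤ t - 1/2) hv.le,
      mul_nonneg (by linarith : (0:ℝ) ≤ 1 - t) hu.le]

section ineq

variable {α β γ δ ε ζ : ℝ}

lemma L1 (hα : 0 < α) (hγ : 0 < γ) (hζ : 0 < ζ)
    (hI : 0 < ε + 2 * (γ + ζ))
    (hII : -2 * (β + ε + α + 2 * γ + ζ) < δ)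
    (hIII : δ * γ < (ε + 2 * ζ) * (β + 2 * α) + 2 * (α + ζ) * γ)
    {x : ℝ} (hx0 : 0 ≤ x) (hx1 : x ≤ 1) :
    0 < α + (β + 2*γ)*x + (δ/2 + ε + ζ)*x^2 := by
  rcases le_or_gt 0 (β + 2*γ + 2*α) with hB | hB
  · have h1 : 0 ≤ 1 - x := by linarith
    have hg1 : 0 < α + (β + 2*γ) + (δ/2 + ε + ζ) := by linarith
    nlinarith [mul_nonneg hB (mul_nonneg hx0 h1), mul_nonneg hα.le (sq_nonneg (1-x)),
      mul_nonneg hg1.le (sq_nonneg x), sq_nonneg (1-2*x), mul_pos hα hg1]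
  · exfalso
    nlinarith [mul_pos hI (neg_pos.2 hB), hγ]

lemma L2 (hα : 0 < α) (hγ : 0 < γ) (hζ : 0 < ζ)
    (hI : 0 < ε + 2 * (γ + ζ))
    (hII : -2 * (β + ε + α + 2 * γ + ζ) < δ)
    (hIII : δ * γ < (ε + 2 * ζ) * (β + 2 * α) + 2 * (α + ζ) * γ)
    {y : ℝ} (hy0 : 0 ≤ y) (hy1 : y ≤ 1) :
    0 < 2*γ*ζ + 2*ζ*(2*α+β)*y + (2*α*γ - δ*γ + ε*(2*α+β))*y^2 := by
  rcases le_or_gt 0 (2*α + β + 2*γ) with hB | hB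
  · have h1 : 0 ≤ 1 - y := by linarith
    have hg0 : 0 < 2*γ*ζ := by positivity
    have hg1 : 0 < 2*γ*ζ + 2*ζ*(2*α+β) + (2*α*γ - δ*γ + ε*(2*α+β)) := by nlinarith
    have hm : 0 ≤ 2*ζ*(2*α+β+2*γ) := by positivity
    nlinarith [mul_nonneg hm (mul_nonneg hy0 h1), mul_nonneg hg0.le (sq_nonneg (1-y)),
      mul_nonneg hg1.le (sq_nonneg y), sq_nonneg (1-2*y), mul_pos hg0 hg1]
  · exfalso
    nlinarith [mul_pos hI (neg_pos.2 hB), mul_pos hγ (show (0:ℝ) < -(2*α+β+2*γ) by linarith)]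

lemma fpos (hα : 0 < α) (hγ : 0 < γ) (hζ : 0 < ζ)
    (hI : 0 < ε + 2 * (γ + ζ))
    (hII : -2 * (β + ε + α + 2 * γ + ζ) < δ)
    (hIII : δ * γ < (ε + 2 * ζ) * (β + 2 * α) + 2 * (α + ζ) * γ)
    {a b x : ℝ} (ha0 : 0 < a) (ha1 : a ≤ 1) (hb0 : 0 < b) (hb1 : b ≤ 1)
    (hx0 : 0 ≤ x) (hx1 : x ≤ 1) :
    0 < a*b*(α + β*x + δ/2*x^2) + (a+b)*(γ*x + ε/2*x^2) + ζ*x^2 := by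
  have hg := L1 hα hγ hζ hI hII hIII hx0 hx1
  have hBx : 0 ≤ γ*x + (ε/2 + ζ)*x^2 := by
    rcases le_or_gt 0 (ε/2 + ζ) with h | h
    · positivity
    · nlinarith [mul_nonneg hx0 (mul_nonneg (neg_nonneg.2 h.le) (sub_nonneg.2 hx1))]
  have key : a*b*(α + β*x + δ/2*x^2) + (a+b)*(γ*x + ε/2*x^2) + ζ*x^2
      = (1-a)*(1-b)*(ζ*x^2) + ((1-a)*b + a*(1-b))*(γ*x + (ε/2 + ζ)*x^2)
        + a*b*(α + (β + 2*γ)*x + (δ/2 + ε + ζ)*x^2) := by ring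
  rw [key]
  have h1 : 0 ≤ (1-a)*(1-b)*(ζ*x^2) :=
    mul_nonneg (mul_nonneg (by linarith) (by linarith)) (by positivity)
  have h2 : 0 ≤ ((1-a)*b + a*(1-b))*(γ*x + (ε/2 + ζ)*x^2) := by
    apply mul_nonneg _ hBx; nlinarith
  nlinarith [mul_pos (mul_pos ha0 hb0) hg]

lemma Fpos (hα : 0 < α) (hγ : 0 < γ) (hζ : 0 < ζ)
    (hI : 0 < ε + 2 * (γ + ζ))
    (hII : -2 * (β + ε + α + 2 * γ + ζ) < δ)
    (hIII : δ * γ < (ε + 2 * ζ) * (β + 2 * α) + 2 * (α + ζ) * γ)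
    {a b y : ℝ} (ha0 : 0 ≤ a) (ha1 : a ≤ 1) (hb0 : 0 ≤ b) (hb1 : b ≤ 1)
    (hy0 : 0 < y) (hy1 : y ≤ 1) :
    0 < 2*γ*ζ*(a*b) + 2*ζ*(α*(a+b) + β*(a*b))*y
        + (2*α*γ - δ*γ*(a*b) + ε*α*(a+b) + ε*β*(a*b))*y^2 := by
  have hh := L2 hα hγ hζ hI hII hIII hy0.le hy1
  have hc00 : 0 < 2*α*γ*y^2 := by positivity
  have hc10 : 0 < α*y*(2*ζ + (2*γ+ε)*y) := by
    apply mul_pos (by positivity)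
    rcases le_or_gt 0 (2*γ+ε) with h | h
    · positivity
    · nlinarith
  have key : 2*γ*ζ*(a*b) + 2*ζ*(α*(a+b) + β*(a*b))*y
        + (2*α*γ - δ*γ*(a*b) + ε*α*(a+b) + ε*β*(a*b))*y^2
      = (1-a)*((1-b)*(2*α*γ*y^2) + b*(α*y*(2*ζ + (2*γ+ε)*y)))
        + a*((1-b)*(α*y*(2*ζ + (2*γ+ε)*y))
            + b*(2*γ*ζ + 2*ζ*(2*α+β)*y + (2*α*γ - δ*γ + ε*(2*α+β))*y^2)) := by ring
  rw [key]
  exact convex2 ha0 ha1 (convex2 hb0 hb1 hc00 hc10) (convex2 hb0 hb1 hc10 hh)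

end ineq

lemma pder_eq (j : ℕ) (R : Polynomial ℝ) : pder j R = Polynomial.derivative^[j] R := by
  induction j with
  | zero => rfl
  | succ n ih => rw [pder, ih, Function.iterate_succ_apply']

lemma pmult_bddAbove (p q : Polynomial ℝ) (x : ℝ) :
    BddAbove {m | m ≤ 3 ∧ ∀ j < m, pev (if x < 1 then p else q) j x = 0} :=
  ⟨3, fun _ hm => hm.1⟩

lemma le_pmult {p q : Polynomial ℝ} {x : ℝ} {k : ℕ} (hk : k ≤ 3)
    (h : ∀ j < k, pev (if x < 1 then p else q) j x = 0) : k ≤ pmult p q x :=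
  le_csSup (pmult_bddAbove p q x) ⟨hk, h⟩

lemma pmult_le_rootMultiplicity {p q r : Polynomial ℝ} {x : ℝ}
    (hr : r = if x < 1 then p else q) (hr0 : r ≠ 0) :
    pmult p q x ≤ r.rootMultiplicity x := by
  apply csSup_le ⟨0, by simp⟩
  rintro m ⟨hm3, hm⟩
  rcases Nat.eq_zero_or_pos m with rfl | hpos
  · exact Nat.zero_le _
  have : m - 1 < r.rootMultiplicity x := by
    apply Polynomial.lt_rootMultiplicity_of_isRoot_iterate_derivative_of_mem_nonZeroDivisors' hr0
    · intro j hj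
      have := hm j (by omega)
      rwa [pev, pder_eq, ← hr] at this
    · intro j _ hj0
      exact mem_nonZeroDivisors_of_ne_zero (by exact_mod_cast hj0)
  omega

lemma sum_rootMultiplicity_le {r : Polynomial ℝ} (hr0 : r ≠ 0) (S : Finset ℝ) :
    ∑ x ∈ S, r.rootMultiplicity x ≤ r.natDegree := by
  calc ∑ x ∈ S, r.rootMultiplicity x = ∑ x ∈ S, r.roots.count x := by
        simp [Polynomial.count_roots]
    _ ≤ r.roots.card := by
        rw [← Multiset.toFinset_sum_count_eq r.roots]
        rw [← Finset.sum_filter_add_sum_filter_not S (· ∈ r.roots.toFinset)]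
        have h2 : ∑ x ∈ S.filter (· ∉ r.roots.toFinset), r.roots.count x = 0 := by
          apply Finset.sum_eq_zero
          intro x hx
          simp only [Finset.mem_filter, Multiset.mem_toFinset] at hx
          exact Multiset.count_eq_zero.2 hx.2
        rw [h2, add_zero]
        apply Finset.sum_le_sum_of_subset
        intro x hx
        simp only [Finset.mem_filter] at hx
        exact hx.2
    _ ≤ r.natDegree := Polynomial.card_roots' r

lemma exists_root_of_sum_pos {r : Polynomial ℝ} {S : Finset ℝ}
    (h : 1 ≤ ∑ x ∈ S, r.rootMultiplicity x) : ∃ u ∈ S, r.eval u = 0 := by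
  by_contra hc
  push_neg at hc
  have : ∑ x ∈ S, r.rootMultiplicity x = 0 := by
    apply Finset.sum_eq_zero
    intro x hx
    exact Polynomial.rootMultiplicity_eq_zero (hc x hx)
  omega

lemma exists_pair_of_two_le {r : Polynomial ℝ} (hr0 : r ≠ 0) (hdeg : r.natDegree ≤ 2)
    {S : Finset ℝ} (h : 2 ≤ ∑ x ∈ S, r.rootMultiplicity x) :
    ∃ u ∈ S, ∃ v ∈ S, ∃ c : ℝ, c ≠ 0 ∧ ∀ t : ℝ, r.eval t = c * (t - u) * (t - v) := by
  -- find submultiset {u, v} ≤ r.roots with u v ∈ S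
  have hsum : 2 ≤ ∑ x ∈ S, r.roots.count x := by
    simpa [Polynomial.count_roots] using h
  obtain ⟨u, hu, v, hv, huv⟩ :
      ∃ u ∈ S, ∃ v ∈ S, ({u, v} : Multiset ℝ) ≤ r.roots := by
    by_cases hcase : ∃ u ∈ S, 2 ≤ r.roots.count u
    · obtain ⟨u, hu, hcu⟩ := hcase
      refine ⟨u, hu, u, hu, Multiset.le_iff_count.2 (fun a => ?_)⟩
      by_cases hau : a = u
      · subst hau
        simpa [Multiset.count_cons, Multiset.count_singleton] using hcu
      · simp [Multiset.count_cons, hau, Multiset.count_singleton]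
    · push_neg at hcase
      -- all counts ≤ 1; need two distinct elements with count ≥ 1
      have : ∃ u ∈ S, ∃ v ∈ S, u ≠ v ∧ 1 ≤ r.roots.count u ∧ 1 ≤ r.roots.count v := by
        by_contra hc
        push_neg at hc
        by_cases hone : ∃ u ∈ S, 1 ≤ r.roots.count u
        · obtain ⟨u, hu, hcu⟩ := hone
          have hrest : ∑ x ∈ S.erase u, r.roots.count x = 0 := by
            apply Finset.sum_eq_zero
            intro v hv
            have hvS := Finset.mem_of_mem_erase hv
            have hvu : v ≠ u := Finset.ne_of_mem_erase hv
            by_contra hcv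
            have := hc u hu v hvS (Ne.symm hvu) hcu
            omega
          have hsplit : r.roots.count u + ∑ x ∈ S.erase u, r.roots.count x
              = ∑ x ∈ S, r.roots.count x := Finset.add_sum_erase S (fun x => r.roots.count x) hu
          have hcu1 := hcase u hu
          omega
        · push_neg at hone
          have : ∑ x ∈ S, r.roots.count x = 0 :=
            Finset.sum_eq_zero (fun x hx => by have := hone x hx; omega)
          omega
      obtain ⟨u, hu, v, hv, huv, hcu, hcv⟩ := this
      refine ⟨u, hu, v, hv, Multiset.le_iff_count.2 (fun a => ?_)⟩
      by_cases hau : a = u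
      · subst hau; simpa [Multiset.count_cons, huv, Multiset.count_singleton] using hcu
      · by_cases hav : a = v
        · subst hav
          simpa [Multiset.count_cons, Ne.symm huv, Multiset.count_singleton] using hcv
        · simp [Multiset.count_cons, hau, hav, Multiset.count_singleton]
  -- now extract the factorization
  have hdvd : (X - C u) * (X - C v) ∣ r := by
    have h1 : (({u, v} : Multiset ℝ).map fun a => X - C a).prod ∣
        (r.roots.map fun a => X - C a).prod :=
      Multiset.prod_dvd_prod_of_le (Multiset.map_le_map huv)
    have h2 := Polynomial.prod_multiset_X_sub_C_dvd r
    have h3 : (({u, v} : Multiset ℝ).map fun a => X - C a).prod = (X - C u) * (X - C v) := by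
      simp [Multiset.map_cons, Multiset.prod_cons, Multiset.map_singleton,
        Multiset.prod_singleton]
    rw [h3] at h1
    exact h1.trans h2
  obtain ⟨k, hk⟩ := hdvd
  have hquad : ((X - C u) * (X - C v) : Polynomial ℝ).Monic :=
    (Polynomial.monic_X_sub_C u).mul (Polynomial.monic_X_sub_C v)
  have hk0 : k ≠ 0 := by
    rintro rfl
    rw [mul_zero] at hk
    exact hr0 hk
  have hdegq : ((X - C u) * (X - C v) : Polynomial ℝ).natDegree = 2 := by
    rw [Polynomial.natDegree_mul (Polynomial.X_sub_C_ne_zero u) (Polynomial.X_sub_C_ne_zero v),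
      Polynomial.natDegree_X_sub_C, Polynomial.natDegree_X_sub_C]
  have hdegk : k.natDegree = 0 := by
    have := Polynomial.natDegree_mul hquad.ne_zero hk0
    rw [← hk, hdegq] at this
    omega
  obtain ⟨c, rfl⟩ := Polynomial.natDegree_eq_zero.1 hdegk
  have hc0 : c ≠ 0 := fun hcc => hk0 (by rw [hcc, map_zero])
  refine ⟨u, hu, v, hv, c, hc0, fun t => ?_⟩
  rw [hk]
  simp only [Polynomial.eval_mul, Polynomial.eval_sub, Polynomial.eval_X, Polynomial.eval_C]
  ring

lemma quad_eval {r : Polynomial ℝ} (h : r.natDegree ≤ 2) (x : ℝ) :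
    r.eval x = r.coeff 0 + r.coeff 1 * x + r.coeff 2 * x^2 := by
  rw [Polynomial.eval_eq_sum_range' (show r.natDegree < 3 by omega)]
  simp only [Finset.sum_range_succ, Finset.sum_range_zero, pow_succ, pow_zero]
  ring

lemma quad_deriv_natDegree {r : Polynomial ℝ} (h : r.natDegree ≤ 2) :
    (Polynomial.derivative r).natDegree ≤ 1 := by
  have := Polynomial.natDegree_derivative_le r
  omega

lemma quad_deriv_eval {r : Polynomial ℝ} (h : r.natDegree ≤ 2) (x : ℝ) :
    (Polynomial.derivative r).eval x = r.coeff 1 + 2 * r.coeff 2 * x := by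
  rw [Polynomial.eval_eq_sum_range' (show (Polynomial.derivative r).natDegree < 2 by
    have := quad_deriv_natDegree h; omega)]
  simp only [Finset.sum_range_succ, Finset.sum_range_zero, Polynomial.coeff_derivative,
    pow_succ, pow_zero]
  push_cast
  ring

lemma quad_deriv2_eval {r : Polynomial ℝ} (h : r.natDegree ≤ 2) (x : ℝ) :
    (Polynomial.derivative (Polynomial.derivative r)).eval x = 2 * r.coeff 2 := by
  have h1 : (Polynomial.derivative r).natDegree ≤ 1 := quad_deriv_natDegree h
  rw [Polynomial.eval_eq_sum_range' (show (Polynomial.derivative (Polynomial.derivative r)).natDegree < 1 by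
    have := Polynomial.natDegree_derivative_le (Polynomial.derivative r); omega)]
  simp only [Finset.sum_range_succ, Finset.sum_range_zero, Polynomial.coeff_derivative,
    pow_succ, pow_zero]
  push_cast
  ring

lemma quad_eq_zero {r : Polynomial ℝ} (h : r.natDegree ≤ 2)
    (h0 : r.coeff 0 = 0) (h1 : r.coeff 1 = 0) (h2 : r.coeff 2 = 0) : r = 0 := by
  ext n
  match n with
  | 0 => simpa using h0
  | 1 => simpa using h1
  | 2 => simpa using h2
  | (n+3) => simp [Polynomial.coeff_eq_zero_of_natDegree_lt (show r.natDegree < n+3 by omega)]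

lemma pev_zero (R : Polynomial ℝ) (x : ℝ) : pev R 0 x = R.eval x := rfl

lemma pev_one (R : Polynomial ℝ) (x : ℝ) : pev R 1 x = (Polynomial.derivative R).eval x := rfl

lemma pev_two (R : Polynomial ℝ) (x : ℝ) :
    pev R 2 x = (Polynomial.derivative (Polynomial.derivative R)).eval x := rfl

lemma pev_three (R : Polynomial ℝ) (x : ℝ) :
    pev R 3 x = (Polynomial.derivative (Polynomial.derivative (Polynomial.derivative R))).eval x := rfl

lemma conn4_iff (α β γ δ ε ζ : ℝ) (P Q : Polynomial ℝ) :
    Conn4 !![1, 0, 0, 0; 0, α, 0, 0; 0, β, γ, 0; 0, δ, ε, ζ] P Q ↔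
      (pev Q 0 1 = pev P 0 1 ∧
       pev Q 1 1 = α * pev P 1 1 ∧
       pev Q 2 1 = β * pev P 1 1 + γ * pev P 2 1 ∧
       pev Q 3 1 = δ * pev P 1 1 + ε * pev P 2 1 + ζ * pev P 3 1) := by
  constructor
  · intro h
    refine ⟨?_, ?_, ?_, ?_⟩
    · have := h 0
      simpa [Fin.sum_univ_four] using this
    · have := h 1
      simpa [Fin.sum_univ_four] using this
    · have := h 2
      simpa [Fin.sum_univ_four] using this
    · have := h 3
      simpa [Fin.sum_univ_four] using this
  · rintro ⟨h0, h1, h2, h3⟩ i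
    fin_cases i <;>
      simp [Fin.sum_univ_four, show ((3:Fin 4):ℕ) = 3 from rfl,
        show ((2:Fin 4):ℕ) = 2 from rfl, show ((1:Fin 4):ℕ) = 1 from rfl] <;> linarith

lemma coeffs_of_factored {r : Polynomial ℝ} (h : r.natDegree ≤ 2) {c u v : ℝ}
    (he : ∀ t : ℝ, r.eval t = c * (t - u) * (t - v)) :
    r.coeff 0 = c * u * v ∧ r.coeff 1 = -c * (u + v) ∧ r.coeff 2 = c := by
  have B0 := (quad_eval h 0).symm.trans (he 0)
  have B1 := (quad_eval h 1).symm.trans (he 1)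
  have B2 := (quad_eval h 2).symm.trans (he 2)
  exact ⟨by linear_combination B0, by linear_combination (4*B1 - B2 - 3*B0)/2,
    by linear_combination (B2 - 2*B1 + B0)/2⟩

lemma backward_direction (α γ ζ : ℝ) (hα : 0 < α) (hγ : 0 < γ) (hζ : 0 < ζ) (β δ ε : ℝ)
    (hI : 0 < ε + 2 * (γ + ζ))
    (hII : -2 * (β + ε + α + 2 * γ + ζ) < δ)
    (hIII : δ * γ < (ε + 2 * ζ) * (β + 2 * α) + 2 * (α + ζ) * γ) :
    GoodForDesign !![1, 0, 0, 0; 0, α, 0, 0; 0, β, γ, 0; 0, δ, ε, ζ] := by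
  intro P Q hP hQ hconn hnz S hS
  set p := Polynomial.derivative P with hp
  set q := Polynomial.derivative Q with hq
  have degp : p.natDegree ≤ 2 := by
    rw [hp]; have := Polynomial.natDegree_derivative_le P; omega
  have degq : q.natDegree ≤ 2 := by
    rw [hq]; have := Polynomial.natDegree_derivative_le Q; omega
  -- the connection equations in coefficient form
  obtain ⟨-, e1, e2, e3⟩ := (conn4_iff α β γ δ ε ζ P Q).1 hconn
  rw [pev_one, pev_one, ← hp, ← hq, quad_eval degq 1, quad_eval degp 1] at e1
  rw [pev_two, pev_two, pev_one, ← hp, ← hq, quad_deriv_eval degq 1, quad_eval degp 1,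
    quad_deriv_eval degp 1] at e2
  rw [pev_three, pev_three, pev_two, pev_one, ← hp, ← hq, quad_deriv2_eval degq 1,
    quad_eval degp 1, quad_deriv_eval degp 1, quad_deriv2_eval degp 1] at e3
  -- p = 0 ↔ q = 0, hence both nonzero
  have hp0 : p ≠ 0 := by
    rintro h0
    rw [h0] at e1 e2 e3
    simp only [Polynomial.coeff_zero, mul_zero, add_zero, zero_add, mul_one, zero_mul,
      one_pow] at e1 e2 e3
    exact hnz ⟨h0, quad_eq_zero degq (by linarith) (by linarith) (by linarith)⟩
  have hq0 : q ≠ 0 := by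
    rintro h0
    rw [h0] at e1 e2 e3
    simp only [Polynomial.coeff_zero, mul_zero, add_zero, zero_add, mul_one, zero_mul,
      one_pow] at e1 e2 e3
    have hU : p.coeff 0 + p.coeff 1 + p.coeff 2 = 0 := by
      have h1 : α * (p.coeff 0 + p.coeff 1 + p.coeff 2) = 0 := by linear_combination -e1
      exact (mul_eq_zero.1 h1).resolve_left hα.ne'
    have hV : p.coeff 1 + 2 * p.coeff 2 = 0 := by
      have h1 : γ * (p.coeff 1 + 2 * p.coeff 2) = 0 := by linear_combination -e2 - β*hU
      exact (mul_eq_zero.1 h1).resolve_left hγ.ne'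
    have hW : p.coeff 2 = 0 := by
      have h1 : ζ * (2 * p.coeff 2) = 0 := by linear_combination -e3 - δ*hU - ε*hV
      have := (mul_eq_zero.1 h1).resolve_left hζ.ne'
      linarith
    exact hnz ⟨quad_eq_zero degp (by linarith) (by linarith) hW, h0⟩
  -- split the sum
  rw [← Finset.sum_filter_add_sum_filter_not S (· < 1)]
  set S1 := S.filter (· < 1) with hS1
  set S2 := S.filter (fun x => ¬ x < 1) with hS2
  have hm1 : ∑ x ∈ S1, pmult p q x ≤ ∑ x ∈ S1, p.rootMultiplicity x := by
    apply Finset.sum_le_sum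
    intro x hx
    have : x < 1 := (Finset.mem_filter.1 hx).2
    exact pmult_le_rootMultiplicity (by rw [if_pos this]) hp0
  have hm2 : ∑ x ∈ S2, pmult p q x ≤ ∑ x ∈ S2, q.rootMultiplicity x := by
    apply Finset.sum_le_sum
    intro x hx
    have : ¬ x < 1 := (Finset.mem_filter.1 hx).2
    exact pmult_le_rootMultiplicity (by rw [if_neg this]) hq0
  set m1 := ∑ x ∈ S1, p.rootMultiplicity x with hm1d
  set m2 := ∑ x ∈ S2, q.rootMultiplicity x with hm2d
  have hb1 : m1 ≤ 2 := le_trans (sum_rootMultiplicity_le hp0 S1) degp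
  have hb2 : m2 ≤ 2 := le_trans (sum_rootMultiplicity_le hq0 S2) degq
  by_contra hcon
  push_neg at hcon
  have htot : 3 ≤ m1 + m2 := by omega
  have hcase : (2 ≤ m1 ∧ 1 ≤ m2) ∨ (1 ≤ m1 ∧ 2 ≤ m2) := by omega
  rcases hcase with ⟨h2m1, h1m2⟩ | ⟨h1m1, h2m2⟩
  · -- p has two roots in [0,1), q has a root in [1,2]
    obtain ⟨u, hu, v, hv, c, hc0, hpe⟩ := exists_pair_of_two_le hp0 degp h2m1
    obtain ⟨t0, ht0, hqt0⟩ := exists_root_of_sum_pos h1m2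
    have hu1 : u < 1 := (Finset.mem_filter.1 hu).2
    have hv1 : v < 1 := (Finset.mem_filter.1 hv).2
    have hu0 : 0 ≤ u := (hS (Finset.mem_filter.1 hu).1).1
    have hv0 : 0 ≤ v := (hS (Finset.mem_filter.1 hv).1).1
    have ht01 : ¬ t0 < 1 := (Finset.mem_filter.1 ht0).2
    have ht02 : t0 ≤ 2 := (hS (Finset.mem_filter.1 ht0).1).2
    push_neg at ht01
    obtain ⟨hp0c, hp1c, hp2c⟩ := coeffs_of_factored degp hpe
    set x := t0 - 1 with hx
    have hkey : q.eval t0 = c * ((1-u)*(1-v)*(α + β*x + δ/2*x^2)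
        + ((1-u)+(1-v))*(γ*x + ε/2*x^2) + ζ*x^2) := by
      rw [quad_eval degq t0]
      linear_combination e1 + x*e2 + (x^2/2)*e3
        + (α + β*x + δ/2*x^2)*hp0c
        + (α + β*x + δ/2*x^2 + γ*x + ε/2*x^2)*hp1c
        + (α + β*x + δ/2*x^2 + 2*(γ*x + ε/2*x^2) + ζ*x^2)*hp2c
    have hfp := fpos hα hγ hζ hI hII hIII
      (show (0:ℝ) < 1-u by linarith) (show (1:ℝ)-u ≤ 1 by linarith)
      (show (0:ℝ) < 1-v by linarith) (show (1:ℝ)-v ≤ 1 by linarith)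
      (show (0:ℝ) ≤ x by simp [hx]; linarith) (show x ≤ 1 by simp [hx]; linarith)
    rw [hqt0] at hkey
    have := mul_ne_zero hc0 (ne_of_gt hfp)
    exact this hkey.symm
  · -- q has two roots in [1,2], p has a root in [0,1)
    obtain ⟨u, hu, v, hv, c, hc0, hqe⟩ := exists_pair_of_two_le hq0 degq h2m2
    obtain ⟨t0, ht0, hpt0⟩ := exists_root_of_sum_pos h1m1
    have hu1 : ¬ u < 1 := (Finset.mem_filter.1 hu).2
    have hv1 : ¬ v < 1 := (Finset.mem_filter.1 hv).2
    have hu2 : u ≤ 2 := (hS (Finset.mem_filter.1 hu).1).2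
    have hv2 : v ≤ 2 := (hS (Finset.mem_filter.1 hv).1).2
    have ht01 : t0 < 1 := (Finset.mem_filter.1 ht0).2
    have ht00 : 0 ≤ t0 := (hS (Finset.mem_filter.1 ht0).1).1
    push_neg at hu1 hv1
    obtain ⟨hq0c, hq1c, hq2c⟩ := coeffs_of_factored degq hqe
    set y := 1 - t0 with hy
    -- solve the triangular system
    have s1 : α*(p.coeff 0 + p.coeff 1 + p.coeff 2) = c*(1-u)*(1-v) := by
      linear_combination hq0c + hq1c + hq2c - e1
    have s2 : α*γ*(p.coeff 1 + 2*p.coeff 2)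
        = α*(c*(2-u-v)) - β*(c*(1-u)*(1-v)) := by
      linear_combination α*(hq1c + 2*hq2c) - α*e2 - β*s1
    have s3 : α*γ*ζ*(2*p.coeff 2)
        = α*γ*(2*c) - δ*γ*(c*(1-u)*(1-v))
          - ε*(α*(c*(2-u-v)) - β*(c*(1-u)*(1-v))) := by
      linear_combination α*γ*(2*hq2c) - α*γ*e3 - δ*γ*s1 - ε*s2
    have hkey : 2*α*γ*ζ*(p.eval t0)
        = c * (2*γ*ζ*((u-1)*(v-1)) + 2*ζ*(α*((u-1)+(v-1)) + β*((u-1)*(v-1)))*y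
            + (2*α*γ - δ*γ*((u-1)*(v-1)) + ε*α*((u-1)+(v-1)) + ε*β*((u-1)*(v-1)))*y^2) := by
      rw [quad_eval degp t0]
      linear_combination 2*ζ*γ*s1 - 2*ζ*y*s2 + y^2*s3
    have hFp := Fpos hα hγ hζ hI hII hIII
      (show (0:ℝ) ≤ u-1 by linarith) (show u-1 ≤ 1 by linarith)
      (show (0:ℝ) ≤ v-1 by linarith) (show v-1 ≤ 1 by linarith)
      (show (0:ℝ) < y by simp [hy]; linarith) (show y ≤ 1 by simp [hy]; linarith)
    rw [hpt0, mul_zero] at hkey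
    have := mul_ne_zero hc0 (ne_of_gt hFp)
    exact this hkey.symm

noncomputable def cub (a b c d : ℝ) : Polynomial ℝ :=
  Polynomial.C a + Polynomial.C b * Polynomial.X + Polynomial.C c * Polynomial.X^2
    + Polynomial.C d * Polynomial.X^3

lemma cub_natDegree (a b c d : ℝ) : (cub a b c d).natDegree ≤ 3 := by
  unfold cub
  compute_degree

lemma cub_eval (a b c d x : ℝ) : (cub a b c d).eval x = a + b*x + c*x^2 + d*x^3 := by
  simp [cub]

lemma cub_deriv (a b c d : ℝ) :
    Polynomial.derivative (cub a b c d) = cub b (2*c) (3*d) 0 := by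
  unfold cub
  simp [Polynomial.derivative_pow]
  ring

-- helper for pmult lower bounds

lemma pmult_ge_one_left {p q : Polynomial ℝ} {x : ℝ} (hx : x < 1) (h : p.eval x = 0) :
    1 ≤ pmult p q x := by
  apply le_pmult (by norm_num)
  intro j hj
  interval_cases j
  rw [if_pos hx, pev_zero, h]

lemma pmult_ge_one_right {p q : Polynomial ℝ} {x : ℝ} (hx : ¬ x < 1) (h : q.eval x = 0) :
    1 ≤ pmult p q x := by
  apply le_pmult (by norm_num)
  intro j hj
  interval_cases j
  rw [if_neg hx, pev_zero, h]

lemma pmult_ge_two_left {p q : Polynomial ℝ} {x : ℝ} (hx : x < 1)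
    (h : p.eval x = 0) (h' : (Polynomial.derivative p).eval x = 0) :
    2 ≤ pmult p q x := by
  apply le_pmult (by norm_num)
  intro j hj
  interval_cases j
  · rw [if_pos hx, pev_zero, h]
  · rw [if_pos hx, pev_one, h']

lemma pmult_ge_two_right {p q : Polynomial ℝ} {x : ℝ} (hx : ¬ x < 1)
    (h : q.eval x = 0) (h' : (Polynomial.derivative q).eval x = 0) :
    2 ≤ pmult p q x := by
  apply le_pmult (by norm_num)
  intro j hj
  interval_cases j
  · rw [if_neg hx, pev_zero, h]
  · rw [if_neg hx, pev_one, h']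

lemma witness1 (α γ ζ : ℝ) (hα : 0 < α) (hγ : 0 < γ) (hζ : 0 < ζ) (β δ ε : ℝ)
    (hC1 : ε + 2 * (γ + ζ) ≤ 0)
    (hgood : GoodForDesign !![1, 0, 0, 0; 0, α, 0, 0; 0, β, γ, 0; 0, δ, ε, ζ]) : False := by
  obtain ⟨k, hkdef⟩ : ∃ k : ℝ, k = ε/2 + ζ := ⟨_, rfl⟩
  have hk : k ≤ -γ := by rw [hkdef]; linarith
  have hk0 : k < 0 := by linarith
  obtain ⟨x0, hx0def⟩ : ∃ x0 : ℝ, x0 = γ / (-k) := ⟨_, rfl⟩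
  have hx0pos : 0 < x0 := by rw [hx0def]; exact div_pos hγ (by linarith)
  have hx0le : x0 ≤ 1 := by
    rw [hx0def, div_le_one (by linarith)]; linarith
  have hkw : k * x0 = -γ := by
    rw [hx0def, mul_div_assoc', div_eq_iff (ne_of_gt (by linarith : (0:ℝ) < -k))]
    ring
  obtain ⟨P, hPdef⟩ : ∃ P : Polynomial ℝ, P = cub 0 0 (-1/2) (1/3) := ⟨_, rfl⟩
  obtain ⟨Q, hQdef⟩ : ∃ Q : Polynomial ℝ,
      Q = cub (-1/6 + γ/2 - k/3) (k-γ) ((γ-2*k)/2) (k/3) := ⟨_, rfl⟩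
  have hP' : Polynomial.derivative P = cub 0 (-1) 1 0 := by
    rw [hPdef, cub_deriv]; norm_num
  have hQ' : Polynomial.derivative Q = cub (k-γ) (γ-2*k) k 0 := by
    rw [hQdef, cub_deriv]
    congr 1 <;> ring
  obtain ⟨z, hzdef⟩ : ∃ z : ℝ, z = 1 + x0 := ⟨_, rfl⟩
  have hconn : Conn4 !![1, 0, 0, 0; 0, α, 0, 0; 0, β, γ, 0; 0, δ, ε, ζ] P Q := by
    rw [conn4_iff]
    refine ⟨?_, ?_, ?_, ?_⟩ <;>
      simp only [pev_zero, pev_one, pev_two, pev_three, hPdef, hQdef, cub_deriv, cub_eval] <;>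
      (rw [hkdef]; ring)
  have hnz : ¬(Polynomial.derivative P = 0 ∧ Polynomial.derivative Q = 0) := by
    rintro ⟨h1, -⟩
    rw [hP'] at h1
    have := congrArg (Polynomial.eval 2) h1
    simp [cub_eval] at this
    linarith
  have hz1 : ¬ z < 1 := by rw [hzdef]; linarith
  have hqz : (Polynomial.derivative Q).eval z = 0 := by
    rw [hQ', hzdef, cub_eval]
    linear_combination x0 * hkw
  have hq1 : (Polynomial.derivative Q).eval 1 = 0 := by
    rw [hQ', cub_eval]; ring
  have hp0 : (Polynomial.derivative P).eval 0 = 0 := by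
    rw [hP', cub_eval]; ring
  have hne01 : (0:ℝ) ≠ 1 := by norm_num
  have hne0z : (0:ℝ) ≠ z := by intro h; rw [hzdef] at h; linarith
  have hne1z : (1:ℝ) ≠ z := by intro h; rw [hzdef] at h; linarith
  have hsub : (↑({0, 1, z} : Finset ℝ) : Set ℝ) ⊆ Set.Icc (0:ℝ) 2 := by
    intro t ht
    simp at ht
    rcases ht with rfl | rfl | rfl
    · exact ⟨le_refl 0, by norm_num⟩
    · exact ⟨by norm_num, by norm_num⟩
    · exact ⟨by rw [hzdef]; linarith, by rw [hzdef]; linarith⟩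
  have hbound := hgood P Q (hPdef ▸ cub_natDegree _ _ _ _) (hQdef ▸ cub_natDegree _ _ _ _)
    hconn hnz {0, 1, z} hsub
  have hsum : 3 ≤ ∑ x ∈ ({0, 1, z} : Finset ℝ),
      pmult (Polynomial.derivative P) (Polynomial.derivative Q) x := by
    rw [Finset.sum_insert (by simp [hne01, hne0z]),
      Finset.sum_insert (by simp [hne1z]), Finset.sum_singleton]
    have b1 := pmult_ge_one_left (q := Polynomial.derivative Q) (by norm_num : (0:ℝ) < 1) hp0
    have b2 := pmult_ge_one_right (p := Polynomial.derivative P) (by norm_num : ¬(1:ℝ) < 1) hq1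
    have b3 := pmult_ge_one_right (p := Polynomial.derivative P) hz1 hqz
    omega
  omega

lemma poly_ivt_dec {r : Polynomial ℝ} {a b : ℝ} (hab : a ≤ b)
    (ha : 0 ≤ r.eval a) (hb : r.eval b ≤ 0) : ∃ z ∈ Set.Icc a b, r.eval z = 0 := by
  have h := intermediate_value_Icc' hab (r.continuousOn (s := Set.Icc a b))
  obtain ⟨z, hz, hfz⟩ := h ⟨hb, ha⟩
  exact ⟨z, hz, hfz⟩

lemma witness2 (α γ ζ : ℝ) (hα : 0 < α) (hγ : 0 < γ) (hζ : 0 < ζ) (β δ ε : ℝ)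
    (hC2 : δ ≤ -2 * (β + ε + α + 2 * γ + ζ))
    (hgood : GoodForDesign !![1, 0, 0, 0; 0, α, 0, 0; 0, β, γ, 0; 0, δ, ε, ζ]) : False := by
  obtain ⟨m, hmdef⟩ : ∃ m : ℝ, m = δ/2 + ε + ζ := ⟨_, rfl⟩
  obtain ⟨P, hPdef⟩ : ∃ P : Polynomial ℝ, P = cub 0 0 0 (1/3) := ⟨_, rfl⟩
  obtain ⟨e0, he0def⟩ : ∃ e0 : ℝ,
      e0 = 1/3 - ((α-(β+2*γ)+m) + ((β+2*γ)-2*m)/2 + m/3) := ⟨_, rfl⟩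
  obtain ⟨Q, hQdef⟩ : ∃ Q : Polynomial ℝ,
      Q = cub e0 (α-(β+2*γ)+m) (((β+2*γ)-2*m)/2) (m/3) := ⟨_, rfl⟩
  have hP' : Polynomial.derivative P = cub 0 0 1 0 := by
    rw [hPdef, cub_deriv]; norm_num
  have hQ' : Polynomial.derivative Q = cub (α-(β+2*γ)+m) ((β+2*γ)-2*m) m 0 := by
    rw [hQdef, cub_deriv]
    congr 1 <;> ring
  have hconn : Conn4 !![1, 0, 0, 0; 0, α, 0, 0; 0, β, γ, 0; 0, δ, ε, ζ] P Q := by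
    rw [conn4_iff]
    refine ⟨?_, ?_, ?_, ?_⟩ <;>
      simp only [pev_zero, pev_one, pev_two, pev_three, hPdef, hQdef, cub_deriv, cub_eval] <;>
      ((try rw [he0def]); rw [hmdef]; ring)
  have hnz : ¬(Polynomial.derivative P = 0 ∧ Polynomial.derivative Q = 0) := by
    rintro ⟨h1, -⟩
    rw [hP'] at h1
    have := congrArg (Polynomial.eval 1) h1
    simp [cub_eval] at this
  have hq1 : (Polynomial.derivative Q).eval 1 = α := by rw [hQ', cub_eval]; ring
  have hq2 : (Polynomial.derivative Q).eval 2 ≤ 0 := by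
    rw [hQ', cub_eval, hmdef]; linarith
  obtain ⟨z, hz12, hqz⟩ := poly_ivt_dec (by norm_num : (1:ℝ) ≤ 2) (by rw [hq1]; linarith) hq2
  have hz1 : ¬ z < 1 := by have := hz12.1; linarith
  have hz2 : z ≤ 2 := hz12.2
  have hne0z : (0:ℝ) ≠ z := by intro h; rw [← h] at hz12; have := hz12.1; linarith
  have hsub : (↑({0, z} : Finset ℝ) : Set ℝ) ⊆ Set.Icc (0:ℝ) 2 := by
    intro t ht
    simp at ht
    rcases ht with rfl | rfl
    · exact ⟨le_refl 0, by norm_num⟩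
    · exact ⟨by linarith [hz12.1], hz2⟩
  have hbound := hgood P Q (hPdef ▸ cub_natDegree _ _ _ _) (hQdef ▸ cub_natDegree _ _ _ _)
    hconn hnz {0, z} hsub
  have hsum : 3 ≤ ∑ x ∈ ({0, z} : Finset ℝ),
      pmult (Polynomial.derivative P) (Polynomial.derivative Q) x := by
    rw [Finset.sum_insert (by simp [hne0z]), Finset.sum_singleton]
    have hb1a : (Polynomial.derivative P).eval 0 = 0 := by rw [hP', cub_eval]; ring
    have hb1b : (Polynomial.derivative (Polynomial.derivative P)).eval 0 = 0 := by
      rw [hP', cub_deriv, cub_eval]; ring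
    have b1 := pmult_ge_two_left (q := Polynomial.derivative Q) (by norm_num : (0:ℝ) < 1)
      hb1a hb1b
    have b2 := pmult_ge_one_right (p := Polynomial.derivative P) hz1 hqz
    omega
  omega

lemma poly_ivt_inc {r : Polynomial ℝ} {a b : ℝ} (hab : a ≤ b)
    (ha : r.eval a ≤ 0) (hb : 0 ≤ r.eval b) : ∃ z ∈ Set.Icc a b, r.eval z = 0 := by
  have h := intermediate_value_Icc hab (r.continuousOn (s := Set.Icc a b))
  obtain ⟨z, hz, hfz⟩ := h ⟨ha, hb⟩
  exact ⟨z, hz, hfz⟩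

lemma witness3 (α γ ζ : ℝ) (hα : 0 < α) (hγ : 0 < γ) (hζ : 0 < ζ) (β δ ε : ℝ)
    (hC3 : (ε + 2 * ζ) * (β + 2 * α) / γ + 2 * (α + ζ) ≤ δ)
    (hgood : GoodForDesign !![1, 0, 0, 0; 0, α, 0, 0; 0, β, γ, 0; 0, δ, ε, ζ]) : False := by
  have hC3' : (ε + 2*ζ) * (β + 2*α) + 2*(α+ζ)*γ ≤ δ*γ := by
    have h1 := (div_add' _ _ _ hγ.ne').symm ▸ hC3
    calc (ε + 2*ζ) * (β + 2*α) + 2*(α+ζ)*γ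
        = ((ε + 2*ζ) * (β + 2*α) / γ + 2*(α+ζ)) * γ := by field_simp
      _ ≤ δ * γ := by apply mul_le_mul_of_nonneg_right hC3 hγ.le
  obtain ⟨u0, hu0def⟩ : ∃ u0 : ℝ, u0 = 1/α := ⟨_, rfl⟩
  obtain ⟨v0, hv0def⟩ : ∃ v0 : ℝ, v0 = (-2 - β*u0)/γ := ⟨_, rfl⟩
  obtain ⟨w0, hw0def⟩ : ∃ w0 : ℝ, w0 = (2 - δ*u0 - ε*v0)/ζ := ⟨_, rfl⟩
  have hu0 : α * u0 = 1 := by rw [hu0def]; field_simp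
  have hv0 : γ * v0 = -2 - β*u0 := by rw [hv0def]; field_simp
  have hw0 : ζ * w0 = 2 - δ*u0 - ε*v0 := by rw [hw0def]; field_simp
  have hu0pos : 0 < u0 := by rw [hu0def]; positivity
  obtain ⟨p, hpdef⟩ : ∃ p : Polynomial ℝ, p = cub (u0-v0+w0/2) (v0-w0) (w0/2) 0 := ⟨_, rfl⟩
  obtain ⟨f0, hf0def⟩ : ∃ f0 : ℝ,
      f0 = 7/3 - ((u0-v0+w0/2) + (v0-w0)/2 + (w0/2)/3) := ⟨_, rfl⟩
  obtain ⟨P, hPdef⟩ : ∃ P : Polynomial ℝ,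
      P = cub f0 (u0-v0+w0/2) ((v0-w0)/2) ((w0/2)/3) := ⟨_, rfl⟩
  obtain ⟨Q, hQdef⟩ : ∃ Q : Polynomial ℝ, Q = cub 0 4 (-2) (1/3) := ⟨_, rfl⟩
  have hP' : Polynomial.derivative P = p := by
    rw [hPdef, cub_deriv, hpdef]
    congr 1 <;> ring
  have hQ' : Polynomial.derivative Q = cub 4 (-4) 1 0 := by
    rw [hQdef, cub_deriv]
    congr 1 <;> ring
  have hconn : Conn4 !![1, 0, 0, 0; 0, α, 0, 0; 0, β, γ, 0; 0, δ, ε, ζ] P Q := by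
    rw [conn4_iff]
    refine ⟨?_, ?_, ?_, ?_⟩ <;>
      simp only [pev_zero, pev_one, pev_two, pev_three, hPdef, hQdef, cub_deriv, cub_eval]
    · rw [hf0def]; ring
    · linear_combination -hu0
    · linear_combination -hv0
    · linear_combination -hw0
  have hnz : ¬(Polynomial.derivative P = 0 ∧ Polynomial.derivative Q = 0) := by
    rintro ⟨-, h2⟩
    rw [hQ'] at h2
    have := congrArg (Polynomial.eval 0) h2
    simp [cub_eval] at this
  -- p has a root in [0,1)
  have hp1 : p.eval 1 = u0 := by rw [hpdef, cub_eval]; ring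
  have hp0val : 2*α*γ*ζ*(p.eval 0) = 2*γ*ζ + 2*ζ*(2*α+β) + 2*α*γ - δ*γ + ε*(2*α+β) := by
    rw [hpdef, cub_eval]
    linear_combination (2*γ*ζ + β*(2*ζ+ε) - γ*δ)*hu0 + (-2*α*ζ - α*ε)*hv0 + (α*γ)*hw0
  have hp0le : p.eval 0 ≤ 0 := by
    by_contra h
    push_neg at h
    nlinarith [mul_pos (mul_pos (mul_pos hα hγ) hζ) h]
  obtain ⟨z, hz01, hpz⟩ := poly_ivt_inc (by norm_num : (0:ℝ) ≤ 1) hp0le (by rw [hp1]; linarith)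
  have hz1 : z < 1 := by
    rcases lt_or_eq_of_le hz01.2 with h | h
    · exact h
    · rw [h, hp1] at hpz; linarith
  have hz0 : 0 ≤ z := hz01.1
  have hnez2 : z ≠ 2 := by intro h; rw [h] at hz1; linarith
  have hsub : (↑({z, 2} : Finset ℝ) : Set ℝ) ⊆ Set.Icc (0:ℝ) 2 := by
    intro t ht
    simp at ht
    rcases ht with rfl | rfl
    · exact ⟨hz0, by linarith⟩
    · exact ⟨by norm_num, le_refl 2⟩
  have hbound := hgood P Q (hPdef ▸ cub_natDegree _ _ _ _) (hQdef ▸ cub_natDegree _ _ _ _)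
    hconn hnz {z, 2} hsub
  have hsum : 3 ≤ ∑ x ∈ ({z, 2} : Finset ℝ),
      pmult (Polynomial.derivative P) (Polynomial.derivative Q) x := by
    rw [Finset.sum_insert (by simp [hnez2]), Finset.sum_singleton]
    have hb2a : (Polynomial.derivative Q).eval 2 = 0 := by rw [hQ', cub_eval]; ring
    have hb2b : (Polynomial.derivative (Polynomial.derivative Q)).eval 2 = 0 := by
      rw [hQ', cub_deriv, cub_eval]; ring
    have b2 := pmult_ge_two_right (p := Polynomial.derivative P) (by norm_num : ¬(2:ℝ) < 1)
      hb2a hb2b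
    have hpz' : (Polynomial.derivative P).eval z = 0 := by rw [hP']; exact hpz
    have b1 := pmult_ge_one_left (q := Polynomial.derivative Q) hz1 hpz'
    omega
  omega

/-- Theorem: the piecewise cubic PW-space on `([0,2];(1))` with connection matrix
`M = [[1,0,0,0],[0,α,0,0],[0,β,γ,0],[0,δ,ε,ζ]]` (with `α,γ,ζ > 0`) is an ECP-space
good for design iff `ε + 2(γ+ζ) > 0` and
`−2(β+ε+α+2γ+ζ) < δ < (ε+2ζ)(β+2α)/γ + 2(α+ζ)`. -/
theorem stmt17 (α γ ζ : ℝ) (hα : 0 < α) (hγ : 0 < γ) (hζ : 0 < ζ) (β δ ε : ℝ) :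
    GoodForDesign !![1, 0, 0, 0; 0, α, 0, 0; 0, β, γ, 0; 0, δ, ε, ζ] ↔
      (0 < ε + 2 * (γ + ζ) ∧
        -2 * (β + ε + α + 2 * γ + ζ) < δ ∧
        δ < (ε + 2 * ζ) * (β + 2 * α) / γ + 2 * (α + ζ)) := by
  constructor
  · intro hgood
    refine ⟨?_, ?_, ?_⟩
    · by_contra h
      push_neg at h
      exact witness1 α γ ζ hα hγ hζ β δ ε h hgood
    · by_contra h
      push_neg at h
      exact witness2 α γ ζ hα hγ hζ β δ ε h hgood
    · by_contra h
      push_neg at h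
      exact witness3 α γ ζ hα hγ hζ β δ ε h hgood
  · rintro ⟨h1, h2, h3⟩
    have h4 : δ - 2*(α+ζ) < (ε+2*ζ)*(β+2*α)/γ := by linarith
    have h5 := (lt_div_iff₀ hγ).1 h4
    have hIII : δ * γ < (ε + 2 * ζ) * (β + 2 * α) + 2 * (α + ζ) * γ := by nlinarith [h5]
    exact backward_direction α γ ζ hα hγ hζ β δ ε h1 h2 hIII
end

section
/- Let n ≥ 1, let I ⊆ ℝ be an interval, let V_0,…,V_n : I → ℝ be differentiable on I, let δ_0,…,δ_n be nonzero real numbers, and suppose that w := Σ_{r=0}^n δ_r V_r vanishes nowhere on I. Set B_r := δ_r V_r / w for r = 0,…,n and V̄_r := (B_{r+1} + ⋯ + B_n)′ for r = 0,…,n−1. Then for all real numbers γ_0,…,γ_n, the identity ((Σ_{r=0}^n γ_r V_r)/w)′ = Σ_{r=0}^{n−1} (γ_{r+1}/δ_{r+1} − γ_r/δ_r) · V̄_r holds on I. -/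
/-!
Since `∑ Bᵣ = 1` and `γᵣ Vᵣ / w = (γᵣ / δᵣ) Bᵣ`, summation by parts rewrites `(∑ γᵣ Vᵣ) / w` on `I`
as the constant `γ₀ / δ₀` plus `∑ᵣ (γᵣ₊₁ / δᵣ₊₁ - γᵣ / δᵣ) (Bᵣ₊₁ + ⋯ + Bₙ)`; differentiate termwise.
-/

theorem Fin.sum_ite_val_lt_sub {M : Type*} [AddCommGroup M] {n : ℕ} (c : Fin (n + 1) → M)
    (j : Fin (n + 1)) :
    ∑ r : Fin n, (if (r : ℕ) < j then c r.succ - c r.castSucc else 0) = c j - c 0 := by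
  induction j using Fin.induction with
  | zero => simp
  | succ i ih =>
    have hsplit : ∀ r : Fin n, (if (r : ℕ) < i.succ then c r.succ - c r.castSucc else 0) =
        (if (r : ℕ) < i.castSucc then c r.succ - c r.castSucc else 0) +
          if r = i then c r.succ - c r.castSucc else 0 := by
      intro r
      by_cases hri : r = i
      · subst hri; simp
      · have : (r : ℕ) ≠ i := Fin.val_ne_of_ne hri
        by_cases hlt : (r : ℕ) < i <;> simp [hri, hlt] <;> omega
    simp only [hsplit, Finset.sum_add_distrib, ih, Finset.sum_ite_eq', Finset.mem_univ, if_true]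
    abel

theorem Fin.sum_mul_eq_mul_sum_add_sum_sub_mul_tail {R : Type*} [CommRing R] {n : ℕ}
    (c B : Fin (n + 1) → R) :
    ∑ j, c j * B j = c 0 * ∑ j, B j +
      ∑ r : Fin n, (c r.succ - c r.castSucc) * ∑ j : Fin (n + 1), if (r : ℕ) < j then B j else 0 := by
  have htail : ∑ r : Fin n, (c r.succ - c r.castSucc) *
      ∑ j : Fin (n + 1), (if (r : ℕ) < j then B j else 0) = ∑ j, (c j - c 0) * B j := by
    simp_rw [Finset.mul_sum, mul_ite, mul_zero]
    rw [Finset.sum_comm]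
    refine Finset.sum_congr rfl fun j _ => ?_
    rw [← Fin.sum_ite_val_lt_sub c j, Finset.sum_mul]
    simp only [ite_mul, zero_mul]
  rw [htail, Finset.mul_sum, ← Finset.sum_add_distrib]
  exact Finset.sum_congr rfl fun j _ => by ring

theorem div_sum_mul_eq_add_sum_tail {K : Type*} [Field K] {n : ℕ} (γ δ v : Fin (n + 1) → K)
    (hδ : ∀ i, δ i ≠ 0) (hw : ∑ r, δ r * v r ≠ 0) :
    (∑ r, γ r * v r) / ∑ r, δ r * v r = γ 0 / δ 0 +
      ∑ r : Fin n, (γ r.succ / δ r.succ - γ r.castSucc / δ r.castSucc) *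
        ∑ j : Fin (n + 1), if (r : ℕ) < j then δ j * v j / ∑ s, δ s * v s else 0 := by
  have hB : ∑ j, δ j * v j / ∑ s, δ s * v s = 1 := by rw [← Finset.sum_div, div_self hw]
  have hcB : ∀ j, γ j / δ j * (δ j * v j / ∑ s, δ s * v s) = γ j * v j / ∑ s, δ s * v s := by
    intro j
    field_simp [hδ j]
  rw [Finset.sum_div, ← mul_one (γ 0 / δ 0), ← hB]
  simp only [← hcB]
  exact Fin.sum_mul_eq_mul_sum_add_sum_sub_mul_tail (fun j => γ j / δ j) _

theorem stmt19_general (n : ℕ) (I : Set ℝ)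
    (V : Fin (n + 1) → ℝ → ℝ)
    (hV : ∀ i, ∀ x ∈ I, DifferentiableWithinAt ℝ (V i) I x)
    (δ : Fin (n + 1) → ℝ) (hδ : ∀ i, δ i ≠ 0)
    (hw : ∀ x ∈ I, (∑ r, δ r * V r x) ≠ 0)
    (γ : Fin (n + 1) → ℝ) :
    ∀ x ∈ I,
      derivWithin (fun y => (∑ r, γ r * V r y) / ∑ r, δ r * V r y) I x
        = ∑ r : Fin n,
            (γ r.succ / δ r.succ - γ r.castSucc / δ r.castSucc) *
              derivWithin (fun y => ∑ j : Fin (n + 1),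
                if (r : ℕ) < (j : ℕ)
                then δ j * V j y / ∑ s, δ s * V s y else 0) I x := by
  intro x hx
  have hB : ∀ j, DifferentiableWithinAt ℝ (fun y => δ j * V j y / ∑ s, δ s * V s y) I x :=
    fun j => ((hV j x hx).const_mul _).div
      (DifferentiableWithinAt.fun_sum fun s _ => (hV s x hx).const_mul _) (hw x hx)
  have htail : ∀ r : Fin n, DifferentiableWithinAt ℝ (fun y => ∑ j : Fin (n + 1),
      if (r : ℕ) < (j : ℕ) then δ j * V j y / ∑ s, δ s * V s y else 0) I x := by
    intro r
    refine DifferentiableWithinAt.fun_sum fun j _ => ?_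
    split_ifs
    exacts [hB j, differentiableWithinAt_const 0]
  have hexpand := fun y (hy : y ∈ I) =>
    div_sum_mul_eq_add_sum_tail γ δ (fun r => V r y) hδ (hw y hy)
  rw [derivWithin_congr hexpand (hexpand x hx), derivWithin_const_add,
    derivWithin_fun_sum fun r _ => (htail r).const_mul _]
  exact Finset.sum_congr rfl fun r _ => derivWithin_const_mul _ (htail r)

/-- Theorem: the coefficient recursion for generalised derivatives. With
`w = ∑ δᵣ Vᵣ` nonvanishing on the interval `I`, `Bᵣ = δᵣ Vᵣ / w` and
`V̄ᵣ = (B_{r+1} + ⋯ + B_n)'`, one has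
`((∑ γᵣ Vᵣ)/w)' = ∑ᵣ (γ_{r+1}/δ_{r+1} − γᵣ/δᵣ) V̄ᵣ` on `I`. -/
theorem stmt19 (n : ℕ) (hn : 1 ≤ n) (I : Set ℝ)
    (hI : I.OrdConnected) (hI2 : I.Nontrivial)
    (V : Fin (n + 1) → ℝ → ℝ)
    (hV : ∀ i, ∀ x ∈ I, DifferentiableWithinAt ℝ (V i) I x)
    (δ : Fin (n + 1) → ℝ) (hδ : ∀ i, δ i ≠ 0)
    (hw : ∀ x ∈ I, (∑ r, δ r * V r x) ≠ 0)
    (γ : Fin (n + 1) → ℝ) :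
    ∀ x ∈ I,
      derivWithin (fun y => (∑ r, γ r * V r y) / ∑ r, δ r * V r y) I x
        = ∑ r : Fin n,
            (γ r.succ / δ r.succ - γ r.castSucc / δ r.castSucc) *
              derivWithin (fun y => ∑ j : Fin (n + 1),
                if (r : ℕ) < (j : ℕ)
                then δ j * V j y / ∑ s, δ s * V s y else 0) I x :=
  stmt19_general n I V hV δ hδ hw γ
end
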